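/- arXiv:quant-ph/0205185 — 9 statements merged into one kernel-verified Lean document; each statement's English description precedes it below -/
import Mathlib

section
/- Let a₁ ≠ a₁′, a₂ ≠ a₂′, b₁ ≠ b₁′, b₂ ≠ b₂′ be real numbers. Define four probability measures on ℝ²: R = ½(δ_{(a₁,a₂)} + δ_{(a₁′,a₂′)}), S = ½(δ_{(a₁,b₂)} + δ_{(a₁′,b₂′)}), T = ½(δ_{(b₁,a₂)} + δ_{(b₁′,a₂′)}), U = ½(δ_{(b₁,b₂′)} + δ_{(b₁′,b₂)}). Then there is no probability measure ρ on ℝ⁴ (with coordinates (q₁,q₂,p₁,p₂)) whose pushforward under (q₁,q₂,p₁,p₂) ↦ (q₁,q₂) equals R, under (q₁,q₂,p₁,p₂) ↦ (q₁,p₂) equals S, under (q₁,q₂,p₁,p₂) ↦ (p₁,q₂) equals T, and under (q₁,q₂,p₁,p₂) ↦ (p₁,p₂) equals U. -/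
open MeasureTheory
open scoped ENNReal

theorem no_four_marginal_solution_dirac_example
    (a₁ a₁' a₂ a₂' b₁ b₁' b₂ b₂' : ℝ)
    (ha₁ : a₁ ≠ a₁') (ha₂ : a₂ ≠ a₂') (hb₁ : b₁ ≠ b₁') (hb₂ : b₂ ≠ b₂') :
    ¬ ∃ ρ : Measure (ℝ × ℝ × ℝ × ℝ), IsProbabilityMeasure ρ ∧
      ρ.map (fun x => (x.1, x.2.1)) =
        (2⁻¹ : ℝ≥0∞) • (Measure.dirac (a₁, a₂) + Measure.dirac (a₁', a₂')) ∧
      ρ.map (fun x => (x.1, x.2.2.2)) =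
        (2⁻¹ : ℝ≥0∞) • (Measure.dirac (a₁, b₂) + Measure.dirac (a₁', b₂')) ∧
      ρ.map (fun x => (x.2.2.1, x.2.1)) =
        (2⁻¹ : ℝ≥0∞) • (Measure.dirac (b₁, a₂) + Measure.dirac (b₁', a₂')) ∧
      ρ.map (fun x => (x.2.2.1, x.2.2.2)) =
        (2⁻¹ : ℝ≥0∞) • (Measure.dirac (b₁, b₂') + Measure.dirac (b₁', b₂)) := by
  rintro ⟨ρ, hprob, hR, hS, hT, hU⟩
  have mf1 : Measurable fun x : ℝ × ℝ × ℝ × ℝ => (x.1, x.2.1) := by fun_prop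
  have mf2 : Measurable fun x : ℝ × ℝ × ℝ × ℝ => (x.1, x.2.2.2) := by fun_prop
  have mf3 : Measurable fun x : ℝ × ℝ × ℝ × ℝ => (x.2.2.1, x.2.1) := by fun_prop
  have mf4 : Measurable fun x : ℝ × ℝ × ℝ × ℝ => (x.2.2.1, x.2.2.2) := by fun_prop
  set E₁ : Set (ℝ × ℝ × ℝ × ℝ) := {x | x.1 = a₁} with hE₁
  set E₂ : Set (ℝ × ℝ × ℝ × ℝ) := {x | x.2.1 = a₂} with hE₂
  set E₃ : Set (ℝ × ℝ × ℝ × ℝ) := {x | x.2.2.1 = b₁} with hE₃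
  set E₄ : Set (ℝ × ℝ × ℝ × ℝ) := {x | x.2.2.2 = b₂} with hE₄
  have mE₃ : MeasurableSet E₃ := (measurableSet_singleton b₁).preimage (by fun_prop)
  have mE₄ : MeasurableSet E₄ := (measurableSet_singleton b₂).preimage (by fun_prop)
  -- ρ (E₁ ∩ E₂) = 1/2
  have h12 : ρ (E₁ ∩ E₂) = 2⁻¹ := by
    have : E₁ ∩ E₂ = (fun x : ℝ × ℝ × ℝ × ℝ => (x.1, x.2.1)) ⁻¹' {(a₁, a₂)} := by
      ext x; simp [hE₁, hE₂, Prod.ext_iff, and_comm]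
    rw [this, ← Measure.map_apply mf1 (measurableSet_singleton _), hR]
    simp [Measure.dirac_apply, Set.indicator, Prod.ext_iff, Ne.symm ha₁]
  -- ρ E₂ = 1/2
  have h2 : ρ E₂ = 2⁻¹ := by
    have : E₂ = (fun x : ℝ × ℝ × ℝ × ℝ => (x.1, x.2.1)) ⁻¹' (Prod.snd ⁻¹' {a₂}) := by
      ext x; simp [hE₂]
    rw [this, ← Measure.map_apply mf1 ((measurableSet_singleton a₂).preimage measurable_snd),
      hR]
    simp [Measure.dirac_apply, Set.indicator, Ne.symm ha₂]
  -- ρ E₁ = 1/2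
  have h1 : ρ E₁ = 2⁻¹ := by
    have : E₁ = (fun x : ℝ × ℝ × ℝ × ℝ => (x.1, x.2.2.2)) ⁻¹' (Prod.fst ⁻¹' {a₁}) := by
      ext x; simp [hE₁]
    rw [this, ← Measure.map_apply mf2 ((measurableSet_singleton a₁).preimage measurable_fst),
      hS]
    simp [Measure.dirac_apply, Set.indicator, Ne.symm ha₁]
  -- ρ (E₁ ∩ E₄) = 1/2
  have h14 : ρ (E₁ ∩ E₄) = 2⁻¹ := by
    have : E₁ ∩ E₄ = (fun x : ℝ × ℝ × ℝ × ℝ => (x.1, x.2.2.2)) ⁻¹' {(a₁, b₂)} := by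
      ext x; simp [hE₁, hE₄, Prod.ext_iff, and_comm]
    rw [this, ← Measure.map_apply mf2 (measurableSet_singleton _), hS]
    simp [Measure.dirac_apply, Set.indicator, Prod.ext_iff, Ne.symm ha₁]
  -- ρ (E₂ ∩ E₃) = 1/2
  have h23 : ρ (E₂ ∩ E₃) = 2⁻¹ := by
    have : E₂ ∩ E₃ = (fun x : ℝ × ℝ × ℝ × ℝ => (x.2.2.1, x.2.1)) ⁻¹' {(b₁, a₂)} := by
      ext x; simp [hE₂, hE₃, Prod.ext_iff, and_comm]
    rw [this, ← Measure.map_apply mf3 (measurableSet_singleton _), hT]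
    simp [Measure.dirac_apply, Set.indicator, Prod.ext_iff, Ne.symm hb₁]
  -- ρ (E₃ ∩ E₄) = 0
  have h34 : ρ (E₃ ∩ E₄) = 0 := by
    have : E₃ ∩ E₄ = (fun x : ℝ × ℝ × ℝ × ℝ => (x.2.2.1, x.2.2.2)) ⁻¹' {(b₁, b₂)} := by
      ext x; simp [hE₃, hE₄, Prod.ext_iff]
    rw [this, ← Measure.map_apply mf4 (measurableSet_singleton _), hU]
    simp [Measure.dirac_apply, Set.indicator, Prod.ext_iff, Ne.symm hb₁, Ne.symm hb₂, hb₂]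
  -- differences have measure zero
  have half_ne_top : (2⁻¹ : ℝ≥0∞) ≠ ⊤ := by simp
  have hd23 : ρ (E₂ \ E₃) = 0 := by
    have := measure_inter_add_diff (μ := ρ) E₂ mE₃
    rw [h23, h2] at this
    exact (ENNReal.add_right_inj half_ne_top).1 (by rw [add_zero]; exact this)
  have hd14 : ρ (E₁ \ E₄) = 0 := by
    have := measure_inter_add_diff (μ := ρ) E₁ mE₄
    rw [h14, h1] at this
    exact (ENNReal.add_right_inj half_ne_top).1 (by rw [add_zero]; exact this)
  -- subset relation
  have hsub : E₁ ∩ E₂ ⊆ (E₃ ∩ E₄) ∪ ((E₂ \ E₃) ∪ (E₁ \ E₄)) := by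
    rintro x ⟨hx1, hx2⟩
    by_cases h3 : x ∈ E₃
    · by_cases h4 : x ∈ E₄
      · exact Or.inl ⟨h3, h4⟩
      · exact Or.inr (Or.inr ⟨hx1, h4⟩)
    · exact Or.inr (Or.inl ⟨hx2, h3⟩)
  have hle : ρ (E₁ ∩ E₂) ≤ ρ (E₃ ∩ E₄) + (ρ (E₂ \ E₃) + ρ (E₁ \ E₄)) :=
    le_trans (measure_mono hsub)
      (le_trans (measure_union_le _ _) (by gcongr; exact measure_union_le _ _))
  rw [h12, h34, hd23, hd14] at hle
  simp at hle
end

section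
/- Let A be a (not necessarily commutative) ring, and let a, a′, b, b′ ∈ A be idempotents (a² = a, a′² = a′, b² = b, b′² = b′) such that each of a, a′ commutes with each of b, b′ (ab = ba, ab′ = b′a, a′b = ba′, a′b′ = b′a′). Set P = a + b + a′b′ − ab − ab′ − a′b. Then P² = P − (aa′ − a′a)(bb′ − b′b). -/
theorem bell_operator_square_identity
    {A : Type*} [Ring A] (a a' b b' : A)
    (ha : a * a = a) (ha' : a' * a' = a') (hb : b * b = b) (hb' : b' * b' = b')
    (hab : a * b = b * a) (hab' : a * b' = b' * a)
    (ha'b : a' * b = b * a') (ha'b' : a' * b' = b' * a')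
    (P : A) (hP : P = a + b + a' * b' - a * b - a * b' - a' * b) :
    P ^ 2 = P - (a * a' - a' * a) * (b * b' - b' * b) := by
  have hab2 : ∀ x : A, b * (a * x) = a * (b * x) := fun x => by
    rw [← mul_assoc, ← hab, mul_assoc]
  have hab'2 : ∀ x : A, b' * (a * x) = a * (b' * x) := fun x => by
    rw [← mul_assoc, ← hab', mul_assoc]
  have ha'b2 : ∀ x : A, b * (a' * x) = a' * (b * x) := fun x => by
    rw [← mul_assoc, ← ha'b, mul_assoc]
  have ha'b'2 : ∀ x : A, b' * (a' * x) = a' * (b' * x) := fun x => by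
    rw [← mul_assoc, ← ha'b', mul_assoc]
  have ha2 : ∀ x : A, a * (a * x) = a * x := fun x => by rw [← mul_assoc, ha]
  have ha'2 : ∀ x : A, a' * (a' * x) = a' * x := fun x => by rw [← mul_assoc, ha']
  have hb2 : ∀ x : A, b * (b * x) = b * x := fun x => by rw [← mul_assoc, hb]
  have hb'2 : ∀ x : A, b' * (b' * x) = b' * x := fun x => by rw [← mul_assoc, hb']
  subst hP
  simp only [pow_two, mul_sub, sub_mul, mul_add, add_mul, mul_assoc,
    ← hab, ← hab', ← ha'b, ← ha'b', ha, ha', hb, hb',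
    hab2, hab'2, ha'b2, ha'b'2, ha2, ha'2, hb2, hb'2]
  abel
end

section
/- Let H be a complex Hilbert space and let a, a′, b, b′ be orthogonal projections on H (bounded self-adjoint idempotents) such that each of a, a′ commutes with each of b, b′. Set P = a + b + a′b′ − ab − ab′ − a′b (a bounded self-adjoint operator). If both P and 1 − P are positive operators (that is, ⟨ψ, Pψ⟩ ≥ 0 and ⟨ψ, (1−P)ψ⟩ ≥ 0 for all ψ ∈ H), then the operator (aa′ − a′a)(bb′ − b′b) is positive, i.e. ⟨ψ, (aa′ − a′a)(bb′ − b′b)ψ⟩ ≥ 0 for all ψ ∈ H. -/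
open scoped InnerProductSpace ComplexOrder

/-!
`P * (1 - P)` equals `[a, a'] * [b, b']` by a purely algebraic computation (it is Landau's identity
`C² = 4 - [A, A'] [B, B']` for the CHSH operator `C`, rewritten through `A = 2a - 1`, …, under which
`P = (2 - C) / 4`). Since `P` and `1 - P` commute, the product of these two positive operators is
positive.
-/

theorem mul_one_sub_eq_commutator_mul_commutator {R : Type*} [Ring R] {a a' b b' : R}
    (ha : IsIdempotentElem a) (ha' : IsIdempotentElem a')
    (hb : IsIdempotentElem b) (hb' : IsIdempotentElem b')
    (hab : Commute a b) (hab' : Commute a b') (ha'b : Commute a' b) (ha'b' : Commute a' b') :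
    (a + b + a' * b' - a * b - a * b' - a' * b) *
        (1 - (a + b + a' * b' - a * b - a * b' - a' * b)) =
      (a * a' - a' * a) * (b * b' - b' * b) := by
  simp only [mul_sub, sub_mul, mul_add, add_mul, mul_one, mul_assoc, hab.symm.eq, hab'.symm.eq,
    hab.symm.left_comm, hab'.symm.left_comm, ha'b.symm.left_comm, ha'b'.symm.left_comm,
    ha.eq, hb.eq, hb'.eq, ha.mul_self_mul, ha'.mul_self_mul]
  abel

theorem ContinuousLinearMap.nonneg_iff_forall_inner_nonneg {H : Type*} [NormedAddCommGroup H]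
    [InnerProductSpace ℂ H] (T : H →L[ℂ] H) : 0 ≤ T ↔ ∀ x, 0 ≤ ⟪x, T x⟫_ℂ := by
  rw [nonneg_iff_isPositive]
  have inner_map_self_eq (x : H) (hx : 0 ≤ ⟪x, T x⟫_ℂ) : ⟪T x, x⟫_ℂ = ⟪x, T x⟫_ℂ :=
    (inner_conj_symm (T x) x).symm.trans hx.isSelfAdjoint.star_eq
  refine ⟨IsPositive.inner_nonneg_right, fun h => (isPositive_iff T).2 ⟨?_, fun x => ?_⟩⟩
  · refine (LinearMap.isSymmetric_iff_inner_map_self_real _).2 fun x => ?_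
    rw [ContinuousLinearMap.coe_coe, inner_map_self_eq x (h x)]
    exact (h x).isSelfAdjoint.star_eq
  · exact inner_map_self_eq x (h x) ▸ h x

theorem commutator_product_positive_of_P_and_one_sub_P_positive_general
    {H : Type*} [NormedAddCommGroup H] [InnerProductSpace ℂ H] [CompleteSpace H]
    (a a' b b' : H →L[ℂ] H)
    (haidem : a * a = a) (ha'idem : a' * a' = a')
    (hbidem : b * b = b) (hb'idem : b' * b' = b')
    (hab : a * b = b * a) (hab' : a * b' = b' * a)
    (ha'b : a' * b = b * a') (ha'b' : a' * b' = b' * a')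
    (P : H →L[ℂ] H) (hP : P = a + b + a' * b' - a * b - a * b' - a' * b)
    (hPpos : ∀ ψ : H, 0 ≤ ⟪ψ, P ψ⟫_ℂ)
    (hPpos' : ∀ ψ : H, 0 ≤ ⟪ψ, (1 - P) ψ⟫_ℂ) :
    ∀ ψ : H, 0 ≤ ⟪ψ, ((a * a' - a' * a) * (b * b' - b' * b)) ψ⟫_ℂ := by
  have hP0 : 0 ≤ P := P.nonneg_iff_forall_inner_nonneg.2 hPpos
  have hQ0 : 0 ≤ 1 - P := (1 - P).nonneg_iff_forall_inner_nonneg.2 hPpos'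
  have hPQ : 0 ≤ P * (1 - P) :=
    ((Commute.one_right P).sub_right (Commute.refl P)).mul_nonneg hP0 hQ0
  rw [hP, mul_one_sub_eq_commutator_mul_commutator haidem ha'idem hbidem hb'idem
    hab hab' ha'b ha'b'] at hPQ
  exact (ContinuousLinearMap.nonneg_iff_forall_inner_nonneg _).1 hPQ

theorem commutator_product_positive_of_P_and_one_sub_P_positive
    {H : Type*} [NormedAddCommGroup H] [InnerProductSpace ℂ H] [CompleteSpace H]
    (a a' b b' : H →L[ℂ] H)
    (ha : IsSelfAdjoint a) (ha' : IsSelfAdjoint a')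
    (hb : IsSelfAdjoint b) (hb' : IsSelfAdjoint b')
    (haidem : a * a = a) (ha'idem : a' * a' = a')
    (hbidem : b * b = b) (hb'idem : b' * b' = b')
    (hab : a * b = b * a) (hab' : a * b' = b' * a)
    (ha'b : a' * b = b * a') (ha'b' : a' * b' = b' * a')
    (P : H →L[ℂ] H) (hP : P = a + b + a' * b' - a * b - a * b' - a' * b)
    (hPpos : ∀ ψ : H, 0 ≤ ⟪ψ, P ψ⟫_ℂ)
    (hPpos' : ∀ ψ : H, 0 ≤ ⟪ψ, (1 - P) ψ⟫_ℂ) :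
    ∀ ψ : H, 0 ≤ ⟪ψ, ((a * a' - a' * a) * (b * b' - b' * b)) ψ⟫_ℂ :=
  commutator_product_positive_of_P_and_one_sub_P_positive_general a a' b b' haidem ha'idem hbidem
    hb'idem hab hab' ha'b ha'b' P hP hPpos hPpos'
end

section
/- Let h : (0,∞) → ℝ be a square-integrable function. Then the function (q,q′) ↦ h(q)h(q′)/(q+q′) is integrable on (0,∞) × (0,∞), and ∫₀^∞ ∫₀^∞ h(q) h(q′) / (q + q′) dq dq′ ≥ 0. -/
/-!
Integrability is a Schur test. With `K(q, x) = √(q / x) / (q + x)`, AM–GM gives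
`|h q * h x| / (q + x) ≤ (h q ^ 2 * K(q, x) + h x ^ 2 * K(x, q)) / 2`, and scaling `x = q u` shows
`∫₀^∞ K(q, x) dx = ∫₀^∞ du / (√u (1 + u)) = π` for every `q > 0`, so the bound is integrable as
soon as `h ∈ L²`. Positivity comes from the Laplace representation
`1 / (q + x) = ∫₀^∞ exp (-(q + x) t) dt`: by Fubini the double integral equals
`∫₀^∞ (∫₀^∞ h q * exp (-q t) dq) ^ 2 dt ≥ 0`.
-/

open MeasureTheory Set Real

local notation "μ₊" => volume.restrict (Ioi (0 : ℝ))

lemma ae_prod_fst_snd {α : Type*} [MeasurableSpace α] {μ : Measure α} {P : α → Prop}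
    (h : ∀ᵐ x ∂μ, P x) : ∀ᵐ z ∂μ.prod μ, P z.1 ∧ P z.2 := by
  filter_upwards [Measure.quasiMeasurePreserving_fst.ae h,
    Measure.quasiMeasurePreserving_snd.ae h] with z h1 h2
  exact ⟨h1, h2⟩

lemma inv_sqrt_mul_one_add_comp_rpow_two {x : ℝ} (hx : 0 < x) :
    (|(2 : ℝ)| * x ^ ((2 : ℝ) - 1)) • (√(x ^ (2 : ℝ)) * (1 + x ^ (2 : ℝ)))⁻¹ =
      2 * (1 + x ^ 2)⁻¹ := by
  rw [rpow_two, sqrt_sq hx.le, abs_two, show (2 : ℝ) - 1 = 1 by norm_num, rpow_one, smul_eq_mul]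
  field_simp

lemma integrableOn_inv_sqrt_mul_one_add :
    IntegrableOn (fun u : ℝ => (√u * (1 + u))⁻¹) (Ioi 0) := by
  rw [← integrableOn_Ioi_comp_rpow_iff _ two_ne_zero]
  exact IntegrableOn.congr_fun (integrable_inv_one_add_sq.integrableOn.const_mul 2)
    (fun x hx => (inv_sqrt_mul_one_add_comp_rpow_two hx).symm) measurableSet_Ioi

lemma integral_inv_sqrt_mul_one_add : ∫ u in Ioi (0 : ℝ), (√u * (1 + u))⁻¹ = π := by
  rw [← integral_comp_rpow_Ioi _ two_ne_zero,
    setIntegral_congr_fun measurableSet_Ioi fun x hx => inv_sqrt_mul_one_add_comp_rpow_two hx,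
    integral_const_mul, integral_Ioi_inv_one_add_sq, arctan_zero]
  ring

noncomputable def weightedHilbertKernel (q x : ℝ) : ℝ := √q / √x / (q + x)

lemma weightedHilbertKernel_nonneg {q x : ℝ} (hq : 0 ≤ q) (hx : 0 ≤ x) :
    0 ≤ weightedHilbertKernel q x := by
  unfold weightedHilbertKernel; positivity

lemma weightedHilbertKernel_eq_inv_mul {q x : ℝ} (hq : 0 < q) (hx : 0 < x) :
    weightedHilbertKernel q x = q⁻¹ * (√(q⁻¹ * x) * (1 + q⁻¹ * x))⁻¹ := by
  rw [weightedHilbertKernel, sqrt_mul (inv_nonneg.2 hq.le), sqrt_inv]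
  have := sqrt_pos.2 hq
  have := sqrt_pos.2 hx
  field_simp

lemma integrableOn_weightedHilbertKernel {q : ℝ} (hq : 0 < q) :
    IntegrableOn (weightedHilbertKernel q) (Ioi 0) := by
  have hcomp : IntegrableOn (fun x => (√(q⁻¹ * x) * (1 + q⁻¹ * x))⁻¹) (Ioi 0) := by
    rw [integrableOn_Ioi_comp_mul_left_iff (fun u => (√u * (1 + u))⁻¹) 0 (inv_pos.2 hq),
      mul_zero]
    exact integrableOn_inv_sqrt_mul_one_add
  exact IntegrableOn.congr_fun (hcomp.const_mul q⁻¹)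
    (fun x hx => (weightedHilbertKernel_eq_inv_mul hq hx).symm) measurableSet_Ioi

lemma integral_weightedHilbertKernel {q : ℝ} (hq : 0 < q) :
    ∫ x in Ioi (0 : ℝ), weightedHilbertKernel q x = π := by
  rw [setIntegral_congr_fun measurableSet_Ioi fun x hx =>
      weightedHilbertKernel_eq_inv_mul hq hx,
    integral_const_mul, integral_comp_mul_left_Ioi (fun u => (√u * (1 + u))⁻¹) 0 (inv_pos.2 hq),
    mul_zero, integral_inv_sqrt_mul_one_add, smul_eq_mul, inv_inv, ← mul_assoc,
    inv_mul_cancel₀ hq.ne', one_mul]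

lemma abs_mul_div_add_le {q x : ℝ} (hq : 0 < q) (hx : 0 < x) (a b : ℝ) :
    |a * b| / (q + x) ≤
      (a ^ 2 * weightedHilbertKernel q x + b ^ 2 * weightedHilbertKernel x q) / 2 := by
  have hq' := sqrt_pos.2 hq
  have hx' := sqrt_pos.2 hx
  have hamgm : 2 * (|a| * |b|) ≤ a ^ 2 * (√q / √x) + b ^ 2 * (√x / √q) := by
    rw [← sub_nonneg]
    have hsq : a ^ 2 * (√q / √x) + b ^ 2 * (√x / √q) - 2 * (|a| * |b|)
        = (|a| * √q - |b| * √x) ^ 2 / (√q * √x) := by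
      rw [← sq_abs a, ← sq_abs b]
      field_simp
      ring
    rw [hsq]
    positivity
  calc |a * b| / (q + x)
      ≤ (a ^ 2 * (√q / √x) + b ^ 2 * (√x / √q)) / 2 / (q + x) := by
        rw [abs_mul]; gcongr; linarith
    _ = _ := by unfold weightedHilbertKernel; rw [add_comm x q]; ring

lemma integrable_mul_weightedHilbertKernel {g : ℝ → ℝ} (hg : Integrable g μ₊) :
    Integrable (fun p : ℝ × ℝ => g p.1 * weightedHilbertKernel p.1 p.2) (μ₊.prod μ₊) := by
  have hK : Measurable fun p : ℝ × ℝ => weightedHilbertKernel p.1 p.2 := by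
    unfold weightedHilbertKernel; fun_prop
  refine (integrable_prod_iff (f := fun p : ℝ × ℝ => g p.1 * weightedHilbertKernel p.1 p.2)
    (hg.1.comp_fst.mul hK.aestronglyMeasurable)).2 ⟨?_, ?_⟩
  · filter_upwards [ae_restrict_mem measurableSet_Ioi] with q hq
    exact (integrableOn_weightedHilbertKernel hq).const_mul _
  · refine (hg.norm.mul_const π).congr ?_
    filter_upwards [ae_restrict_mem measurableSet_Ioi] with q (hq : 0 < q)
    rw [setIntegral_congr_fun measurableSet_Ioi fun x (hx : 0 < x) => by
      rw [norm_mul, norm_of_nonneg (weightedHilbertKernel_nonneg hq.le hx.le)],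
      integral_const_mul, integral_weightedHilbertKernel hq]

theorem integrable_mul_div_add_of_memLp {h : ℝ → ℝ} (hh : MemLp h 2 μ₊) :
    Integrable (fun p : ℝ × ℝ => h p.1 * h p.2 / (p.1 + p.2)) (μ₊.prod μ₊) := by
  have hK := integrable_mul_weightedHilbertKernel hh.integrable_sq
  have hK_swap : Integrable (fun p : ℝ × ℝ => h p.2 ^ 2 * weightedHilbertKernel p.2 p.1)
      (μ₊.prod μ₊) := hK.swap
  refine ((hK.add hK_swap).div_const 2).mono' ?_ ?_
  · exact ((hh.1.aemeasurable.comp_fst.mul hh.1.aemeasurable.comp_snd).div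
      (by fun_prop)).aestronglyMeasurable
  · filter_upwards [ae_prod_fst_snd (ae_restrict_mem measurableSet_Ioi)] with p ⟨hp₁, hp₂⟩
    rw [norm_div, norm_of_nonneg (add_pos hp₁ hp₂).le, Real.norm_eq_abs]
    exact abs_mul_div_add_le hp₁ hp₂ _ _

section LaplaceRepresentation

variable {μ : Measure ℝ} {f : ℝ → ℝ}

lemma ae_prod_add_pos (hμ : ∀ᵐ x ∂μ, 0 < x) : ∀ᵐ p ∂μ.prod μ, 0 < p.1 + p.2 :=
  (ae_prod_fst_snd hμ).mono fun _ hp => add_pos hp.1 hp.2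

lemma integral_exp_neg_mul_Ioi {s : ℝ} (hs : 0 < s) :
    ∫ t in Ioi (0 : ℝ), exp (-s * t) = s⁻¹ := by
  rw [integral_exp_mul_Ioi (neg_neg_of_pos hs)]
  simp

lemma integral_prod_mul_exp_neg_mul [SFinite μ] (f : ℝ → ℝ) (t : ℝ) :
    ∫ p, f p.1 * f p.2 * exp (-(p.1 + p.2) * t) ∂μ.prod μ = (∫ x, f x * exp (-x * t) ∂μ) ^ 2 := by
  rw [sq, ← integral_prod_mul]
  congr 1 with p
  rw [show -(p.1 + p.2) * t = -p.1 * t + -p.2 * t by ring, exp_add]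
  ring

lemma integrable_mul_mul_exp_neg_add_mul (hf : AEStronglyMeasurable f μ) (hμ : ∀ᵐ x ∂μ, 0 < x)
    (hF : Integrable (fun p : ℝ × ℝ => f p.1 * f p.2 / (p.1 + p.2)) (μ.prod μ)) :
    Integrable (fun z : (ℝ × ℝ) × ℝ => f z.1.1 * f z.1.2 * exp (-(z.1.1 + z.1.2) * z.2))
      ((μ.prod μ).prod (volume.restrict (Ioi 0))) := by
  refine (integrable_prod_iff ?_).2 ⟨?_, ?_⟩
  · have : AEStronglyMeasurable (fun p : ℝ × ℝ => f p.1 * f p.2) (μ.prod μ) :=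
      hf.comp_fst.mul hf.comp_snd
    exact this.comp_fst.mul (by fun_prop)
  · filter_upwards [ae_prod_add_pos hμ] with p hp
    exact (integrableOn_exp_mul_Ioi (neg_neg_of_pos hp) 0).const_mul _
  · refine hF.norm.congr ?_
    filter_upwards [ae_prod_add_pos hμ] with p hp
    simp_rw [norm_mul, norm_of_nonneg (exp_pos _).le]
    rw [integral_const_mul, integral_exp_neg_mul_Ioi hp, norm_div, norm_of_nonneg hp.le,
      ← norm_mul, div_eq_mul_inv]

theorem integral_mul_div_add_nonneg [SFinite μ] (hf : AEStronglyMeasurable f μ)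
    (hμ : ∀ᵐ x ∂μ, 0 < x)
    (hF : Integrable (fun p : ℝ × ℝ => f p.1 * f p.2 / (p.1 + p.2)) (μ.prod μ)) :
    0 ≤ ∫ p, f p.1 * f p.2 / (p.1 + p.2) ∂μ.prod μ := by
  have hF_laplace : ∀ᵐ p ∂μ.prod μ, f p.1 * f p.2 / (p.1 + p.2)
      = ∫ t in Ioi (0 : ℝ), f p.1 * f p.2 * exp (-(p.1 + p.2) * t) := by
    filter_upwards [ae_prod_add_pos hμ] with p hp
    rw [integral_const_mul, integral_exp_neg_mul_Ioi hp, div_eq_mul_inv]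
  rw [integral_congr_ae hF_laplace,
    integral_integral_swap (integrable_mul_mul_exp_neg_add_mul hf hμ hF)]
  simp_rw [integral_prod_mul_exp_neg_mul]
  exact integral_nonneg fun t => sq_nonneg _

end LaplaceRepresentation

theorem hilbert_kernel_quadratic_form_nonneg
    (h : ℝ → ℝ) (hh : MemLp h 2 (volume.restrict (Set.Ioi (0 : ℝ)))) :
    Integrable (fun x : ℝ × ℝ => h x.1 * h x.2 / (x.1 + x.2))
      ((volume.restrict (Set.Ioi (0 : ℝ))).prod (volume.restrict (Set.Ioi (0 : ℝ)))) ∧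
    0 ≤ ∫ q in Set.Ioi (0 : ℝ), ∫ q' in Set.Ioi (0 : ℝ), h q * h q' / (q + q') := by
  have hF := integrable_mul_div_add_of_memLp hh
  refine ⟨hF, ?_⟩
  rw [← integral_prod _ hF]
  exact integral_mul_div_add_nonneg hh.1 (ae_restrict_mem measurableSet_Ioi) hF
end

section
/- Let h : (0,∞) → ℝ be a square-integrable function. Then ∫₀^∞ ∫₀^∞ |h(q)| |h(q′)| / (q + q′) dq dq′ ≤ π ∫₀^∞ h(q)² dq. -/
/-!
Schur's test with the weight `x ^ (-1/2)`. By AM-GM,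
`|h q| |h q'| / (q + q') ≤ ½ h(q)² √q / (√q' (q + q')) + ½ h(q')² √q' / (√q (q + q'))`,
the two terms are exchanged by the symmetry `q ↔ q'` of the kernel, and
`∫₀^∞ √q / (√q' (q + q')) dq' = π` for every `q > 0`, an antiderivative being `2 arctan √(q' / q)`.
-/

open MeasureTheory Set Real Filter Topology
open scoped ENNReal

theorem lintegral_lintegral_add_swap {α : Type*} [MeasurableSpace α] {μ : Measure α} [SFinite μ]
    {f : α → α → ℝ≥0∞} (hf : AEMeasurable (Function.uncurry f) (μ.prod μ)) :
    ∫⁻ x, ∫⁻ y, (f x y + f y x) ∂μ ∂μ = 2 * ∫⁻ x, ∫⁻ y, f x y ∂μ ∂μ := by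
  calc ∫⁻ x, ∫⁻ y, (f x y + f y x) ∂μ ∂μ
      = ∫⁻ z, (Function.uncurry f z + Function.uncurry f z.swap) ∂μ.prod μ :=
        (lintegral_prod _ (hf.add hf.prod_swap)).symm
    _ = 2 * ∫⁻ z, Function.uncurry f z ∂μ.prod μ := by
        rw [lintegral_add_left' hf, lintegral_prod_swap, two_mul]
    _ = 2 * ∫⁻ x, ∫⁻ y, f x y ∂μ ∂μ := by rw [lintegral_prod _ hf]; rfl

theorem hasDerivAt_two_mul_arctan_sqrt_div {a x : ℝ} (ha : 0 < a) (hx : 0 < x) :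
    HasDerivAt (fun x => 2 * arctan (√x / √a)) (√a / (√x * (a + x))) x := by
  refine ((((hasDerivAt_sqrt hx.ne').div_const √a).arctan).const_mul 2).congr_deriv ?_
  rw [div_pow, sq_sqrt hx.le, sq_sqrt ha.le]
  field_simp
  exact (sq_sqrt ha.le).symm

theorem tendsto_two_mul_arctan_sqrt_div_atTop {a : ℝ} (ha : 0 < a) :
    Tendsto (fun x => 2 * arctan (√x / √a)) atTop (𝓝 π) := by
  have := ((tendsto_arctan_atTop.mono_right nhdsWithin_le_nhds).comp
    (tendsto_sqrt_atTop.atTop_div_const (sqrt_pos.2 ha))).const_mul 2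
  rwa [mul_div_cancel₀ _ two_ne_zero] at this

theorem lintegral_Ioi_sqrt_div_sqrt_mul_add {a : ℝ} (ha : 0 < a) :
    ∫⁻ x in Ioi 0, ENNReal.ofReal (√a / (√x * (a + x))) = ENNReal.ofReal π := by
  have hcont : ContinuousWithinAt (fun x => 2 * arctan (√x / √a)) (Ici 0) 0 := by fun_prop
  have hderiv := fun x (hx : x ∈ Ioi (0 : ℝ)) => hasDerivAt_two_mul_arctan_sqrt_div ha hx
  have hnonneg : ∀ x ∈ Ioi (0 : ℝ), 0 ≤ √a / (√x * (a + x)) := fun x hx => by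
    have : 0 < x := hx; positivity
  have hlim := tendsto_two_mul_arctan_sqrt_div_atTop ha
  rw [← ofReal_integral_eq_lintegral_ofReal
      (integrableOn_Ioi_deriv_of_nonneg hcont hderiv hnonneg hlim)
      ((ae_restrict_iff' measurableSet_Ioi).2 (ae_of_all _ hnonneg)),
    integral_Ioi_of_hasDerivAt_of_nonneg hcont hderiv hnonneg hlim]
  simp

theorem abs_mul_abs_div_add_le {q q' : ℝ} (hq : 0 < q) (hq' : 0 < q') (a b : ℝ) :
    |a| * |b| / (q + q') ≤
      a ^ 2 / 2 * (√q / (√q' * (q + q'))) + b ^ 2 / 2 * (√q' / (√q * (q' + q))) := by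
  have hgap_nonneg : 0 ≤ (|a| * √q - |b| * √q') ^ 2 / (2 * √q * √q' * (q + q')) := by positivity
  rw [← sq_abs a, ← sq_abs b]
  have hgap : (|a| * √q - |b| * √q') ^ 2 / (2 * √q * √q' * (q + q')) =
      |a| ^ 2 / 2 * (√q / (√q' * (q + q'))) + |b| ^ 2 / 2 * (√q' / (√q * (q' + q))) -
        |a| * |b| / (q + q') := by
    field_simp
    ring
  linarith

theorem lintegral_Ioi_hilbert_le {h : ℝ → ℝ} (hh : AEMeasurable h (volume.restrict (Ioi 0))) :
    ∫⁻ q in Ioi 0, ∫⁻ q' in Ioi 0, ‖|h q| * |h q'| / (q + q')‖ₑ ≤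
      ENNReal.ofReal π * ∫⁻ q in Ioi 0, ENNReal.ofReal (h q ^ 2) := by
  set K : ℝ → ℝ → ℝ≥0∞ := fun q q' => ENNReal.ofReal (h q ^ 2 / 2 * (√q / (√q' * (q + q'))))
  have hK : AEMeasurable (Function.uncurry K)
      ((volume.restrict (Ioi 0)).prod (volume.restrict (Ioi 0))) := by
    have := hh.comp_fst (ν := volume.restrict (Ioi (0:ℝ)))
    unfold K Function.uncurry
    fun_prop
  calc ∫⁻ q in Ioi 0, ∫⁻ q' in Ioi 0, ‖|h q| * |h q'| / (q + q')‖ₑ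
      ≤ ∫⁻ q in Ioi 0, ∫⁻ q' in Ioi 0, (K q q' + K q' q) := by
        refine setLIntegral_mono' measurableSet_Ioi fun q hq => ?_
        refine setLIntegral_mono' measurableSet_Ioi fun q' hq' => ?_
        rw [Real.enorm_of_nonneg (by have : (0:ℝ) < q + q' := add_pos hq hq'; positivity)]
        exact (ENNReal.ofReal_le_ofReal (abs_mul_abs_div_add_le hq hq' _ _)).trans
          ENNReal.ofReal_add_le
    _ = 2 * ∫⁻ q in Ioi 0, ∫⁻ q' in Ioi 0, K q q' := lintegral_lintegral_add_swap hK
    _ = 2 * ∫⁻ q in Ioi 0, ENNReal.ofReal (h q ^ 2 / 2) * ENNReal.ofReal π := by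
        refine congrArg _ (setLIntegral_congr_fun measurableSet_Ioi fun q (hq : 0 < q) => ?_)
        simp_rw [K, ENNReal.ofReal_mul (by positivity : 0 ≤ h q ^ 2 / 2)]
        rw [lintegral_const_mul' _ _ ENNReal.ofReal_ne_top,
          lintegral_Ioi_sqrt_div_sqrt_mul_add hq]
    _ = ENNReal.ofReal π * ∫⁻ q in Ioi 0, ENNReal.ofReal (h q ^ 2) := by
        rw [lintegral_mul_const' _ _ ENNReal.ofReal_ne_top, mul_comm _ (ENNReal.ofReal π),
          mul_left_comm, ← lintegral_const_mul' _ _ ENNReal.ofNat_ne_top]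
        congr 2 with q
        rw [← ENNReal.ofReal_ofNat 2, ← ENNReal.ofReal_mul zero_le_two,
          mul_div_cancel₀ _ two_ne_zero]

theorem hilbert_inequality
    (h : ℝ → ℝ) (hh : MemLp h 2 (volume.restrict (Set.Ioi (0 : ℝ)))) :
    (∫ q in Set.Ioi (0 : ℝ), ∫ q' in Set.Ioi (0 : ℝ), |h q| * |h q'| / (q + q'))
      ≤ Real.pi * ∫ q in Set.Ioi (0 : ℝ), h q ^ 2 := by
  have hsq : 0 ≤ ∫ q in Ioi 0, h q ^ 2 :=
    setIntegral_nonneg measurableSet_Ioi fun _ _ => sq_nonneg _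
  -- `‖∫ f‖ₑ ≤ ∫⁻ ‖f‖ₑ` holds without integrability, so non-integrable inner integrals need no care.
  refine (le_abs_self _).trans ?_
  rw [← ENNReal.ofReal_le_ofReal_iff (by positivity), ← Real.enorm_eq_ofReal_abs,
    ENNReal.ofReal_mul pi_pos.le,
    ofReal_integral_eq_lintegral_ofReal hh.integrable_sq (ae_of_all _ fun _ => sq_nonneg _)]
  calc _ ≤ ∫⁻ q in Ioi 0, ‖∫ q' in Ioi 0, |h q| * |h q'| / (q + q')‖ₑ :=
        enorm_integral_le_lintegral_enorm _
    _ ≤ ∫⁻ q in Ioi 0, ∫⁻ q' in Ioi 0, ‖|h q| * |h q'| / (q + q')‖ₑ :=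
        lintegral_mono fun _ => enorm_integral_le_lintegral_enorm _
    _ ≤ _ := lintegral_Ioi_hilbert_le hh.aemeasurable
end

section
/- ∫₀^∞ ∫₀^∞ 1 / ((q + 1)(q′ + 1)(q + q′)) dq dq′ = π²/4. -/
/-!
The inner integral is elementary: `1 / ((q' + 1) (q' + q))` has antiderivative
`(log (q' + 1) - log (q' + q)) / (q - 1)`, so the double integral equals
`∫₀^∞ log q / (q² - 1) dq`. The substitution `q ↦ q⁻¹` leaves `log q / (q² - 1) dq`
invariant, so this is twice the integral over `(1, ∞)`. There `log q / (q² - 1)` is the sum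
of the nonnegative terms `log q / q^(2n+2)`, with `∫₁^∞ log q / q^(2n+2) dq = 1 / (2n+1)²`,
and `∑ₙ 1 / (2n+1)² = (3/4) ζ(2) = π² / 8`.
-/

open MeasureTheory Set Filter Real Topology

lemma hasSum_one_div_two_mul_add_one_sq :
    HasSum (fun n : ℕ => 1 / (2 * n + 1 : ℝ) ^ 2) (π ^ 2 / 8) := by
  set f : ℕ → ℝ := fun n => 1 / (n : ℝ) ^ 2
  have heven : HasSum (fun n => f (2 * n)) (π ^ 2 / 6 / 4) :=
    (hasSum_zeta_two.div_const 4).congr_fun fun n => by simp only [f]; push_cast; ring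
  have hodd : Summable fun n => f (2 * n + 1) :=
    hasSum_zeta_two.summable.comp_injective fun a b h => by simpa using h
  have htotal := hasSum_zeta_two.unique (heven.even_add_odd hodd.hasSum)
  have hodd_sum : HasSum (fun n => f (2 * n + 1)) (π ^ 2 / 8) := by
    convert hodd.hasSum using 1
    linarith
  exact hodd_sum.congr_fun fun n => by simp only [f]; push_cast; rfl

lemma hasSum_div_pow_two_mul_add_two (a : ℝ) {x : ℝ} (hx : 1 < |x|) :
    HasSum (fun n : ℕ => a / x ^ (2 * n + 2)) (a / (x ^ 2 - 1)) := by
  have hx2 : 1 < x ^ 2 := (one_lt_sq_iff_one_lt_abs x).2 hx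
  have hgeom := (hasSum_geometric_of_lt_one (by positivity) (inv_lt_one_of_one_lt₀ hx2)).mul_left
    (a / x ^ 2)
  have hx0 : x ≠ 0 := by rintro rfl; norm_num at hx2
  rw [show a / (x ^ 2 - 1) = a / x ^ 2 * (1 - (x ^ 2)⁻¹)⁻¹ by
    field_simp [show x ^ 2 - 1 ≠ 0 by linarith]]
  exact hgeom.congr_fun fun n => by rw [pow_add, pow_mul, inv_pow, div_mul_eq_mul_div]; field_simp

theorem integrable_and_integral_eq_of_hasSum_of_nonneg {α : Type*} [MeasurableSpace α]
    {μ : Measure α} {f : ℕ → α → ℝ} {F : α → ℝ} {c : ℝ}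
    (hf_nonneg : ∀ n, 0 ≤ᵐ[μ] f n) (hf_int : ∀ n, Integrable (f n) μ)
    (hF : ∀ᵐ x ∂μ, HasSum (fun n => f n x) (F x))
    (hc : HasSum (fun n => ∫ x, f n x ∂μ) c) :
    Integrable F μ ∧ ∫ x, F x ∂μ = c := by
  have hf_nonneg' : ∀ᵐ x ∂μ, ∀ n, 0 ≤ f n x := ae_all_iff.2 hf_nonneg
  have hF_nonneg : 0 ≤ᵐ[μ] F := by
    filter_upwards [hF, hf_nonneg'] with x hx hx0 using hx.nonneg hx0
  have hF_meas : AEStronglyMeasurable F μ :=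
    aestronglyMeasurable_of_tendsto_ae atTop
      (fun s => Finset.aestronglyMeasurable_fun_sum _ fun n _ => (hf_int n).1)
      (hF.mono fun x hx => hx.tendsto_sum_nat)
  have hlint : ∫⁻ x, ENNReal.ofReal (F x) ∂μ = ENNReal.ofReal c := by
    calc ∫⁻ x, ENNReal.ofReal (F x) ∂μ = ∫⁻ x, ∑' n, ENNReal.ofReal (f n x) ∂μ := by
          refine lintegral_congr_ae ?_
          filter_upwards [hF, hf_nonneg'] with x hx hx0
          rw [← hx.tsum_eq, ENNReal.ofReal_tsum_of_nonneg hx0 hx.summable]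
      _ = ∑' n, ∫⁻ x, ENNReal.ofReal (f n x) ∂μ :=
          lintegral_tsum fun n => (hf_int n).1.aemeasurable.ennreal_ofReal
      _ = ∑' n, ENNReal.ofReal (∫ x, f n x ∂μ) := by
          simp only [ofReal_integral_eq_lintegral_ofReal (hf_int _) (hf_nonneg _)]
      _ = ENNReal.ofReal c := by
          rw [← ENNReal.ofReal_tsum_of_nonneg (fun n => integral_nonneg_of_ae (hf_nonneg n))
            hc.summable, hc.tsum_eq]
  refine ⟨⟨hF_meas, (hasFiniteIntegral_iff_ofReal hF_nonneg).2 (hlint ▸ ENNReal.ofReal_lt_top)⟩, ?_⟩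
  rw [integral_eq_lintegral_of_nonneg_ae hF_nonneg hF_meas, hlint,
    ENNReal.toReal_ofReal (hc.nonneg fun n => integral_nonneg_of_ae (hf_nonneg n))]

lemma integrableOn_and_integral_Ioi_one_log_div_pow (n : ℕ) :
    IntegrableOn (fun x => log x / x ^ (n + 2)) (Ioi 1) ∧
      ∫ x in Ioi (1 : ℝ), log x / x ^ (n + 2) = 1 / ((n : ℝ) + 1) ^ 2 := by
  set k : ℝ := n + 1
  have hk : 0 < k := by positivity
  set G : ℝ → ℝ := fun x => -(log x / x ^ (n + 1)) / k - (k ^ 2 * x ^ (n + 1))⁻¹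
  have hderiv : ∀ x ∈ Ici (1 : ℝ), HasDerivAt G (log x / x ^ (n + 2)) x := by
    intro x hx
    have hx0 : x ≠ 0 := (zero_lt_one.trans_le hx).ne'
    have hpow := hasDerivAt_pow (n + 1) x
    have := (((hasDerivAt_log hx0).div hpow (pow_ne_zero _ hx0)).neg.div_const k).sub
      ((hpow.const_mul (k ^ 2)).inv (by positivity))
    refine this.congr_deriv ?_
    rw [Nat.add_sub_cancel]
    field_simp
    push_cast
    ring
  have hnonneg : ∀ x ∈ Ioi (1 : ℝ), 0 ≤ log x / x ^ (n + 2) := fun x hx =>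
    div_nonneg (log_nonneg hx.out.le) (pow_nonneg (zero_le_one.trans hx.out.le) _)
  have hlim : Tendsto G atTop (𝓝 0) := by
    have hlog : Tendsto (fun x : ℝ => log x / x ^ (n + 1)) atTop (𝓝 0) := by
      simpa only [rpow_natCast] using
        (isLittleO_log_rpow_atTop (by positivity : (0 : ℝ) < (n + 1 : ℕ))).tendsto_div_nhds_zero
    have hinv : Tendsto (fun x : ℝ => (k ^ 2 * x ^ (n + 1))⁻¹) atTop (𝓝 0) :=
      ((tendsto_pow_atTop n.succ_ne_zero).const_mul_atTop (by positivity)).inv_tendsto_atTop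
    simpa only [neg_zero, zero_div, sub_zero] using (hlog.neg.div_const k).sub hinv
  refine ⟨integrableOn_Ioi_deriv_of_nonneg' hderiv hnonneg hlim, ?_⟩
  rw [integral_Ioi_of_hasDerivAt_of_nonneg' hderiv hnonneg hlim]
  simp [G, k]

lemma integral_Ioi_zero_one_div_add_mul_add {a b : ℝ} (ha : 0 < a) (hb : 0 < b) (hab : a ≠ b) :
    ∫ y in Ioi (0 : ℝ), 1 / ((y + a) * (y + b)) = (log b - log a) / (b - a) := by
  have hba : b - a ≠ 0 := sub_ne_zero.2 hab.symm
  set G : ℝ → ℝ := fun y => (log (y + a) - log (y + b)) / (b - a)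
  have hderiv : ∀ y ∈ Ici (0 : ℝ), HasDerivAt G (1 / ((y + a) * (y + b))) y := by
    intro y hy
    have hya : y + a ≠ 0 := by linarith [hy.out]
    have hyb : y + b ≠ 0 := by linarith [hy.out]
    have := ((((hasDerivAt_id' y).add_const a).log hya).sub
      (((hasDerivAt_id' y).add_const b).log hyb)).div_const (b - a)
    refine this.congr_deriv ?_
    field_simp
    ring
  have hnonneg : ∀ y ∈ Ioi (0 : ℝ), 0 ≤ 1 / ((y + a) * (y + b)) := fun y hy => by
    have := hy.out
    positivity
  have hlim : Tendsto G atTop (𝓝 0) := by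
    have := ((tendsto_log_comp_add_sub_log a).sub (tendsto_log_comp_add_sub_log b)).div_const
      (b - a)
    simpa [G] using this
  rw [integral_Ioi_of_hasDerivAt_of_nonneg' hderiv hnonneg hlim]
  simp only [G, zero_add]
  ring

section InvSubstitution

variable {E : Type*} [NormedAddCommGroup E] [NormedSpace ℝ E]

lemma image_inv_Ioi_one : (fun x : ℝ => x⁻¹) '' Ioi 1 = Ioo 0 1 := by
  ext y
  constructor
  · rintro ⟨x, hx, rfl⟩
    exact ⟨by positivity [hx.out], inv_lt_one_of_one_lt₀ hx⟩
  · rintro ⟨hy0, hy1⟩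
    exact ⟨y⁻¹, (one_lt_inv₀ hy0).2 hy1, inv_inv y⟩

lemma hasDerivWithinAt_inv_Ioi_one {x : ℝ} (hx : x ∈ Ioi 1) :
    HasDerivWithinAt (fun y : ℝ => y⁻¹) (-(x ^ 2)⁻¹) (Ioi 1) x :=
  (hasDerivAt_inv (zero_lt_one.trans hx.out).ne').hasDerivWithinAt

lemma integrableOn_Ioo_zero_one_iff_comp_inv (g : ℝ → E) :
    IntegrableOn g (Ioo 0 1) ↔ IntegrableOn (fun x => (x ^ 2)⁻¹ • g x⁻¹) (Ioi 1) := by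
  rw [← image_inv_Ioi_one, integrableOn_image_iff_integrableOn_abs_deriv_smul measurableSet_Ioi
    (fun x hx => hasDerivWithinAt_inv_Ioi_one hx) inv_injective.injOn]
  simp only [abs_neg, abs_inv, abs_pow, sq_abs]

lemma integral_Ioo_zero_one_eq_integral_comp_inv (g : ℝ → E) :
    ∫ x in Ioo 0 1, g x = ∫ x in Ioi 1, (x ^ 2)⁻¹ • g x⁻¹ := by
  rw [← image_inv_Ioi_one, integral_image_eq_integral_abs_deriv_smul measurableSet_Ioi
    (fun x hx => hasDerivWithinAt_inv_Ioi_one hx) inv_injective.injOn]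
  simp only [abs_neg, abs_inv, abs_pow, sq_abs]

end InvSubstitution

lemma inv_sq_mul_log_inv_div_inv_sq_sub_one {x : ℝ} (hx : x ≠ 0) :
    (x ^ 2)⁻¹ * (log x⁻¹ / (x⁻¹ ^ 2 - 1)) = log x / (x ^ 2 - 1) := by
  rw [log_inv]
  by_cases h : x ^ 2 = 1
  · simp [h]
  have hx2 : x ^ 2 - 1 ≠ 0 := sub_ne_zero.2 h
  have hx2' : 1 - x ^ 2 ≠ 0 := sub_ne_zero.2 (Ne.symm h)
  field_simp
  ring

lemma integral_Ioi_zero_one_div_mul_mul_add {q : ℝ} (hq : 0 < q) (hq1 : q ≠ 1) :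
    ∫ q' in Ioi (0 : ℝ), 1 / ((q + 1) * (q' + 1) * (q + q')) = log q / (q ^ 2 - 1) := by
  have hq1' : q - 1 ≠ 0 := sub_ne_zero.2 hq1
  have hq2 : q ^ 2 - 1 ≠ 0 := by
    rw [show q ^ 2 - 1 = (q + 1) * (q - 1) by ring]
    exact mul_ne_zero (by positivity) hq1'
  calc ∫ q' in Ioi (0 : ℝ), 1 / ((q + 1) * (q' + 1) * (q + q'))
      = (q + 1)⁻¹ * ∫ q' in Ioi (0 : ℝ), 1 / ((q' + 1) * (q' + q)) := by
        rw [← integral_const_mul]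
        congr 1 with q'
        rw [add_comm q q', one_div, one_div, mul_assoc, mul_inv]
    _ = log q / (q ^ 2 - 1) := by
        rw [integral_Ioi_zero_one_div_add_mul_add one_pos hq hq1.symm, log_one, sub_zero]
        field_simp
        ring

lemma integrableOn_and_integral_Ioi_one_log_div_sq_sub_one :
    IntegrableOn (fun x => log x / (x ^ 2 - 1)) (Ioi 1) ∧
      ∫ x in Ioi (1 : ℝ), log x / (x ^ 2 - 1) = π ^ 2 / 8 := by
  refine integrable_and_integral_eq_of_hasSum_of_nonneg
    (f := fun n x => log x / x ^ (2 * n + 2))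
    (fun n => ae_restrict_of_forall_mem measurableSet_Ioi fun x hx =>
      div_nonneg (log_nonneg hx.out.le) (pow_nonneg (zero_le_one.trans hx.out.le) _))
    (fun n => (integrableOn_and_integral_Ioi_one_log_div_pow (2 * n)).1)
    (ae_restrict_of_forall_mem measurableSet_Ioi fun x hx =>
      hasSum_div_pow_two_mul_add_two _ (by rwa [abs_of_pos (zero_lt_one.trans hx.out)]))
    (hasSum_one_div_two_mul_add_one_sq.congr_fun fun n => ?_)
  rw [(integrableOn_and_integral_Ioi_one_log_div_pow (2 * n)).2]
  push_cast
  ring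

theorem gamma_value_for_one_over_q_plus_one :
    (∫ q in Set.Ioi (0 : ℝ), ∫ q' in Set.Ioi (0 : ℝ), 1 / ((q + 1) * (q' + 1) * (q + q')))
      = Real.pi ^ 2 / 4 := by
  set F : ℝ → ℝ := fun x => log x / (x ^ 2 - 1)
  obtain ⟨hF_int, hF_integral⟩ := integrableOn_and_integral_Ioi_one_log_div_sq_sub_one
  have h_inner : ∀ᵐ q ∂volume.restrict (Ioi 0),
      ∫ q' in Ioi (0 : ℝ), 1 / ((q + 1) * (q' + 1) * (q + q')) = F q := by
    filter_upwards [ae_restrict_mem measurableSet_Ioi, ae_restrict_of_ae (volume.ae_ne 1)]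
      with q hq hq1 using integral_Ioi_zero_one_div_mul_mul_add hq hq1
  have h_symm : EqOn (fun x => (x ^ 2)⁻¹ • F x⁻¹) F (Ioi 1) := fun x hx =>
    inv_sq_mul_log_inv_div_inv_sq_sub_one (zero_lt_one.trans hx.out).ne'
  have hF_int' : IntegrableOn F (Ioc 0 1) := by
    rw [integrableOn_Ioc_iff_integrableOn_Ioo, integrableOn_Ioo_zero_one_iff_comp_inv]
    exact hF_int.congr_fun h_symm.symm measurableSet_Ioi
  calc _ = ∫ q in Ioi 0, F q := integral_congr_ae h_inner
    _ = (∫ q in Ioo 0 1, F q) + ∫ q in Ioi 1, F q := by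
        rw [← Ioc_union_Ioi_eq_Ioi zero_le_one, setIntegral_union (Ioc_disjoint_Ioi le_rfl)
          measurableSet_Ioi hF_int' hF_int, integral_Ioc_eq_integral_Ioo]
    _ = 2 * ∫ q in Ioi 1, F q := by
        rw [integral_Ioo_zero_one_eq_integral_comp_inv,
          setIntegral_congr_fun measurableSet_Ioi h_symm]
        ring
    _ = π ^ 2 / 4 := by
        rw [hF_integral]
        ring
end

section
/- As L → ∞, the quantity (1/ln(L+1)) ∫₀^L ∫₀^L 1 / (√(q+1) · √(q′+1) · (q + q′)) dq dq′ tends to π. -/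
open MeasureTheory Filter

/-!
Write `u = q + 1`, `v = q' + 1`. Since `1 / (q + q') = 1 / (u + v) + 2 / ((q + q') (u + v))`, the
kernel splits into the homogeneous kernel `1 / (√u √v (u + v))` and a remainder which, by AM-GM
(`q + q' ≥ 2 √q √q'`, `u + v ≥ 2 √u √v`), is at most a product `k(q) k(q') / 2` with
`k(x) = 1 / (√x (1 + x))` and `∫₀^∞ k = π`; so the remainder contributes `O(1)`.
The homogeneous part has the primitive `(2 / u) arctan (√(v / u))` in `v`; by `arctan y ≤ y`,
up to errors whose `u`-integrals are bounded, its inner integral is `π / u`, whose integral over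
`[1, L + 1]` is `π log (L + 1)`. Hence the double integral is `π log (L + 1) + O(1)`.
-/

open Set Real Topology

lemma arctan_le_self {x : ℝ} (hx : 0 ≤ x) : arctan x ≤ x :=
  calc arctan x ≤ tan (arctan x) := le_tan (arctan_nonneg.2 hx) (arctan_lt_pi_div_two x)
    _ = x := tan_arctan x

lemma pi_div_two_sub_inv_le_arctan {y : ℝ} (hy : 0 < y) : π / 2 - y⁻¹ ≤ arctan y := by
  have := arctan_le_self (inv_nonneg.2 hy.le)
  rw [arctan_inv_of_pos hy] at this
  linarith

lemma two_div_mul_arctan_sub_le {a M : ℝ} (ha : 0 < a) :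
    2 / a * (arctan (√M / √a) - arctan (1 / √a)) ≤ π / a := by
  have h1 := arctan_lt_pi_div_two (√M / √a)
  have h2 : 0 ≤ arctan (1 / √a) := arctan_nonneg.2 (by positivity)
  calc 2 / a * (arctan (√M / √a) - arctan (1 / √a))
      ≤ 2 / a * (π / 2) := by gcongr; linarith
    _ = π / a := by ring

lemma le_two_div_mul_arctan_sub {a M : ℝ} (ha : 0 < a) (hM : 0 < M) :
    π / a - 2 / (√a * √M) - 2 / (a * √a) ≤
      2 / a * (arctan (√M / √a) - arctan (1 / √a)) := by
  have hsa : 0 < √a := sqrt_pos.2 ha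
  have h1 := pi_div_two_sub_inv_le_arctan (div_pos (sqrt_pos.2 hM) hsa)
  have h2 := arctan_le_self (one_div_pos.2 hsa).le
  rw [inv_div] at h1
  calc π / a - 2 / (√a * √M) - 2 / (a * √a) = 2 / a * (π / 2 - √a / √M - 1 / √a) := by
        field_simp
        linear_combination 2 * mul_self_sqrt ha.le
    _ ≤ _ := by gcongr

lemma hasDerivAt_arctan_sqrt_div_sqrt {a v : ℝ} (ha : 0 < a) (hv : 0 < v) :
    HasDerivAt (fun v => 2 / a * arctan (√v / √a)) (1 / (√a * √v * (a + v))) v := by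
  refine ((hasDerivAt_sqrt hv.ne').div_const √a).arctan.const_mul (2 / a) |>.congr_deriv ?_
  rw [div_pow, sq_sqrt ha.le, sq_sqrt hv.le]
  field_simp

lemma setIntegral_Ioo_eq_sub_of_hasDerivAt {F f : ℝ → ℝ} {a b : ℝ} (hab : a ≤ b)
    (hF : ∀ x ∈ Icc a b, HasDerivAt F (f x) x) (hf : IntegrableOn f (Ioo a b)) :
    ∫ x in Ioo a b, f x = F b - F a := by
  rw [← integral_Ioc_eq_integral_Ioo, ← intervalIntegral.integral_of_le hab]
  rw [← uIcc_of_le hab] at hF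
  exact intervalIntegral.integral_eq_sub_of_hasDerivAt hF
    ((intervalIntegrable_iff_integrableOn_Ioo_of_le hab).2 hf)

lemma integral_Ioi_one_div_sqrt_mul_one_add :
    ∫ x in Ioi (0 : ℝ), 1 / (√x * (1 + x)) = π := by
  have hderiv : ∀ x ∈ Ioi (0 : ℝ),
      HasDerivAt (fun v => 2 * arctan √v) (1 / (√x * (1 + x))) x := by
    intro x hx
    simpa using hasDerivAt_arctan_sqrt_div_sqrt one_pos hx
  have hlim : Tendsto (fun v => 2 * arctan √v) atTop (𝓝 π) := by
    have := (tendsto_arctan_atTop.mono_right nhdsWithin_le_nhds).comp tendsto_sqrt_atTop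
    simpa [mul_div_cancel₀] using this.const_mul 2
  rw [integral_Ioi_of_hasDerivAt_of_nonneg (by fun_prop) hderiv
    (fun x (hx : 0 < x) => by positivity) hlim]
  simp

lemma integrableOn_Ioi_one_div_sqrt_mul_one_add :
    IntegrableOn (fun x : ℝ => 1 / (√x * (1 + x))) (Ioi 0) :=
  Integrable.of_integral_ne_zero (integral_Ioi_one_div_sqrt_mul_one_add ▸ pi_ne_zero)

lemma integrableOn_Ioo_one_div_sqrt_mul_one_add (L : ℝ) :
    IntegrableOn (fun x : ℝ => 1 / (√x * (1 + x))) (Ioo 0 L) :=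
  integrableOn_Ioi_one_div_sqrt_mul_one_add.mono_set Ioo_subset_Ioi_self

lemma setIntegral_Ioo_one_div_sqrt_mul_one_add_le (L : ℝ) :
    ∫ x in Ioo 0 L, 1 / (√x * (1 + x)) ≤ π := by
  rw [← integral_Ioi_one_div_sqrt_mul_one_add]
  refine setIntegral_mono_set integrableOn_Ioi_one_div_sqrt_mul_one_add ?_
    Ioo_subset_Ioi_self.eventuallyLE
  filter_upwards [ae_restrict_mem measurableSet_Ioi] with x (hx : 0 < x)
  positivity

lemma tendsto_inv_mul_of_abs_sub_mul_le {α : Type*} {l : Filter α} {f g : α → ℝ} {c C : ℝ}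
    (hg : Tendsto g l atTop) (hfg : ∀ᶠ x in l, |f x - c * g x| ≤ C) :
    Tendsto (fun x => (g x)⁻¹ * f x) l (𝓝 c) := by
  have hC : Tendsto (fun x => C * (g x)⁻¹) l (𝓝 0) := by
    simpa using (tendsto_inv_atTop_zero.comp hg).const_mul C
  rw [tendsto_iff_norm_sub_tendsto_zero]
  refine squeeze_zero' (.of_forall fun _ => norm_nonneg _) ?_ hC
  filter_upwards [hfg, hg.eventually_gt_atTop 0] with x hx hgx
  rw [norm_eq_abs, show (g x)⁻¹ * f x - c = (g x)⁻¹ * (f x - c * g x) by field_simp, abs_mul,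
    abs_of_pos (inv_pos.2 hgx), mul_comm]
  exact mul_le_mul_of_nonneg_right hx (inv_pos.2 hgx).le

namespace CarlemanForm

noncomputable def kernel (q q' : ℝ) : ℝ := 1 / (√(q + 1) * √(q' + 1) * (q + q'))

noncomputable def shiftedKernel (q q' : ℝ) : ℝ := 1 / (√(q + 1) * √(q' + 1) * (q + q' + 2))

noncomputable def innerLowerBound (L q : ℝ) : ℝ :=
  π / (q + 1) - 2 / (√(q + 1) * √(L + 1)) - 2 / ((q + 1) * √(q + 1))

noncomputable def innerUpperBound (q : ℝ) : ℝ := π / (q + 1) + π / 2 * (1 / (√q * (1 + q)))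

lemma shiftedKernel_le_kernel {q q' : ℝ} (hq : 0 ≤ q) (hq' : 0 < q') :
    shiftedKernel q q' ≤ kernel q q' := by
  unfold shiftedKernel kernel
  exact one_div_le_one_div_of_le (by positivity)
    (mul_le_mul_of_nonneg_left (by linarith) (by positivity))

lemma kernel_le_shiftedKernel_add {q q' : ℝ} (hq : 0 < q) (hq' : 0 < q') :
    kernel q q' ≤ shiftedKernel q q' + 1 / (√q * (1 + q)) * (1 / (√q' * (1 + q'))) / 2 := by
  have amgm {a b : ℝ} (ha : 0 ≤ a) (hb : 0 ≤ b) : 2 * (√a * √b) ≤ a + b := by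
    nlinarith [sq_nonneg (√a - √b), sq_sqrt ha, sq_sqrt hb]
  have h0 := amgm hq.le hq'.le
  have h1 := amgm (by linarith : 0 ≤ q + 1) (by linarith : 0 ≤ q' + 1)
  unfold shiftedKernel kernel
  calc 1 / (√(q + 1) * √(q' + 1) * (q + q'))
      = 1 / (√(q + 1) * √(q' + 1) * (q + q' + 2))
        + 2 / (√(q + 1) * √(q' + 1) * ((q + q') * (q + 1 + (q' + 1)))) := by
        field_simp
        ring
    _ ≤ 1 / (√(q + 1) * √(q' + 1) * (q + q' + 2))
        + 2 / (√(q + 1) * √(q' + 1) *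
          (2 * (√q * √q') * (2 * (√(q + 1) * √(q' + 1))))) := by
        gcongr
    _ = _ := by
        have e : √(q + 1) * √(q + 1) * (√(q' + 1) * √(q' + 1)) = (1 + q) * (1 + q') := by
          rw [mul_self_sqrt (by linarith), mul_self_sqrt (by linarith)]; ring
        field_simp
        linear_combination (-(q + q' + 2)) * e

lemma integrableOn_kernel {q L : ℝ} (hq : 0 < q) : IntegrableOn (kernel q) (Ioo 0 L) := by
  refine (ContinuousOn.integrableOn_Icc ?_).mono_set Ioo_subset_Icc_self
  refine continuousOn_const.div (by fun_prop) fun x hx => ?_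
  have : 0 ≤ x := hx.1
  positivity

lemma integrableOn_shiftedKernel {q L : ℝ} (hq : 0 < q + 1) :
    IntegrableOn (shiftedKernel q) (Ioo 0 L) := by
  refine (ContinuousOn.integrableOn_Icc ?_).mono_set Ioo_subset_Icc_self
  refine continuousOn_const.div (by fun_prop) fun x hx => ?_
  have : 0 ≤ x := hx.1
  have : 0 < q + x + 2 := by linarith
  positivity

lemma integral_shiftedKernel {q L : ℝ} (hq : 0 < q + 1) (hL : 0 ≤ L) :
    ∫ q' in Ioo 0 L, shiftedKernel q q' =
      2 / (q + 1) * (arctan (√(L + 1) / √(q + 1)) - arctan (1 / √(q + 1))) := by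
  have hderiv : ∀ x ∈ Icc 0 L,
      HasDerivAt (fun x => 2 / (q + 1) * arctan (√(x + 1) / √(q + 1)))
        (shiftedKernel q x) x := by
    intro x hx
    refine (hasDerivAt_arctan_sqrt_div_sqrt hq (by linarith [hx.1])).comp_add_const x 1
      |>.congr_deriv ?_
    unfold shiftedKernel
    ring_nf
  rw [setIntegral_Ioo_eq_sub_of_hasDerivAt hL hderiv
    (integrableOn_shiftedKernel hq), zero_add, sqrt_one, mul_sub]

lemma innerLowerBound_le_integral_kernel {q L : ℝ} (hq : 0 < q) (hL : 0 ≤ L) :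
    innerLowerBound L q ≤ ∫ q' in Ioo 0 L, kernel q q' :=
  calc innerLowerBound L q ≤ ∫ q' in Ioo 0 L, shiftedKernel q q' := by
        rw [integral_shiftedKernel (by linarith) hL]
        exact le_two_div_mul_arctan_sub (by linarith) (by linarith)
    _ ≤ _ := setIntegral_mono_on (integrableOn_shiftedKernel (by linarith))
        (integrableOn_kernel hq) measurableSet_Ioo fun _ hx => shiftedKernel_le_kernel hq.le hx.1

lemma integral_kernel_le_innerUpperBound {q L : ℝ} (hq : 0 < q) (hL : 0 ≤ L) :
    ∫ q' in Ioo 0 L, kernel q q' ≤ innerUpperBound q := by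
  have hK := integrableOn_Ioo_one_div_sqrt_mul_one_add L
  have hG := integrableOn_shiftedKernel (L := L) (by linarith : 0 < q + 1)
  calc ∫ q' in Ioo 0 L, kernel q q'
      ≤ ∫ q' in Ioo 0 L,
          (shiftedKernel q q' + 1 / (√q * (1 + q)) * (1 / (√q' * (1 + q'))) / 2) :=
        setIntegral_mono_on (integrableOn_kernel hq) (hG.add ((hK.const_mul _).div_const _))
          measurableSet_Ioo fun _ hx => kernel_le_shiftedKernel_add hq hx.1
    _ = (∫ q' in Ioo 0 L, shiftedKernel q q')
          + 1 / (√q * (1 + q)) * (∫ q' in Ioo 0 L, 1 / (√q' * (1 + q'))) / 2 := by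
        rw [integral_add hG ((hK.const_mul _).div_const _), integral_div, integral_const_mul]
    _ ≤ innerUpperBound q := by
        have hG_le : ∫ q' in Ioo 0 L, shiftedKernel q q' ≤ π / (q + 1) := by
          rw [integral_shiftedKernel (by linarith) hL]
          exact two_div_mul_arctan_sub_le (by linarith)
        have hK_le := setIntegral_Ioo_one_div_sqrt_mul_one_add_le L
        have hkq : 0 ≤ 1 / (√q * (1 + q)) := by positivity
        unfold innerUpperBound
        nlinarith

lemma integrableOn_pi_div_add_one (L : ℝ) :
    IntegrableOn (fun q : ℝ => π / (q + 1)) (Ioo 0 L) := by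
  refine (ContinuousOn.integrableOn_Icc ?_).mono_set Ioo_subset_Icc_self
  exact continuousOn_const.div (by fun_prop) fun x hx => by linarith [hx.1]

lemma integral_pi_div_add_one {L : ℝ} (hL : 0 ≤ L) :
    ∫ q in Ioo 0 L, π / (q + 1) = π * log (L + 1) := by
  have hderiv : ∀ x ∈ Icc 0 L, HasDerivAt (fun y => π * log (y + 1)) (π / (x + 1)) x := by
    intro x hx
    have hx : 0 < x + 1 := by linarith [hx.1]
    simpa [div_eq_mul_inv] using ((hasDerivAt_log hx.ne').comp_add_const x 1).const_mul π
  simp [setIntegral_Ioo_eq_sub_of_hasDerivAt hL hderiv (integrableOn_pi_div_add_one L)]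

lemma integrableOn_innerUpperBound (L : ℝ) : IntegrableOn innerUpperBound (Ioo 0 L) :=
  (integrableOn_pi_div_add_one L).add ((integrableOn_Ioo_one_div_sqrt_mul_one_add L).const_mul _)

lemma integral_innerUpperBound_le {L : ℝ} (hL : 0 ≤ L) :
    ∫ q in Ioo 0 L, innerUpperBound q ≤ π * log (L + 1) + π / 2 * π := by
  unfold innerUpperBound
  rw [integral_add (integrableOn_pi_div_add_one L)
    ((integrableOn_Ioo_one_div_sqrt_mul_one_add L).const_mul _), integral_const_mul,
    integral_pi_div_add_one hL]
  gcongr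
  exact setIntegral_Ioo_one_div_sqrt_mul_one_add_le L

lemma integrableOn_innerLowerBound {L : ℝ} (hL : 0 ≤ L) :
    IntegrableOn (innerLowerBound L) (Ioo 0 L) := by
  refine (ContinuousOn.integrableOn_Icc ?_).mono_set Ioo_subset_Icc_self
  refine .sub (.sub ?_ ?_) ?_ <;> refine continuousOn_const.div (by fun_prop) fun x hx => ?_ <;>
    · have : 0 ≤ x := hx.1
      positivity

lemma le_integral_innerLowerBound {L : ℝ} (hL : 0 ≤ L) :
    π * log (L + 1) - 8 ≤ ∫ q in Ioo 0 L, innerLowerBound L q := by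
  have hM : 0 < √(L + 1) := sqrt_pos.2 (by linarith)
  have hderiv : ∀ x ∈ Icc 0 L,
      HasDerivAt (fun y => π * log (y + 1) - 4 * √(y + 1) / √(L + 1) + 4 * (√(y + 1))⁻¹)
        (innerLowerBound L x) x := by
    intro x hx
    have hu : 0 < x + 1 := by linarith [hx.1]
    have hsu : 0 < √(x + 1) := sqrt_pos.2 hu
    have hsqrt := hasDerivAt_sqrt hu.ne'
    refine ((((hasDerivAt_log hu.ne').const_mul π).sub ((hsqrt.const_mul 4).div_const _)).add
      ((hsqrt.inv hsu.ne').const_mul 4)).comp_add_const x 1 |>.congr_deriv ?_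
    unfold innerLowerBound
    field_simp
    rw [sq_sqrt hu.le]
    ring
  rw [setIntegral_Ioo_eq_sub_of_hasDerivAt hL hderiv (integrableOn_innerLowerBound hL), zero_add,
    sqrt_one, log_one, mul_div_assoc, div_self hM.ne']
  have : 0 < (√(L + 1))⁻¹ := inv_pos.2 hM
  simp only [mul_zero, inv_one, mul_one, div_eq_mul_inv]
  linarith

lemma integrableOn_integral_kernel {L : ℝ} (hL : 0 ≤ L) :
    IntegrableOn (fun q => ∫ q' in Ioo 0 L, kernel q q') (Ioo 0 L) := by
  have hmeas : StronglyMeasurable (Function.uncurry kernel) := by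
    unfold kernel Function.uncurry
    exact Measurable.stronglyMeasurable (by fun_prop)
  refine (integrableOn_innerUpperBound L).mono' hmeas.integral_prod_right.aestronglyMeasurable ?_
  filter_upwards [ae_restrict_mem measurableSet_Ioo] with q hq
  rw [norm_eq_abs, abs_of_nonneg (setIntegral_nonneg measurableSet_Ioo fun x hx => ?_)]
  · exact integral_kernel_le_innerUpperBound hq.1 hL
  · have := hq.1
    have := hx.1
    unfold kernel
    positivity

lemma abs_integral_integral_kernel_sub_le {L : ℝ} (hL : 0 ≤ L) :
    |(∫ q in Ioo 0 L, ∫ q' in Ioo 0 L, kernel q q') - π * log (L + 1)| ≤ 8 := by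
  have hF := integrableOn_integral_kernel hL
  have hupper :
      ∫ q in Ioo 0 L, ∫ q' in Ioo 0 L, kernel q q' ≤ π * log (L + 1) + π / 2 * π :=
    (setIntegral_mono_on hF (integrableOn_innerUpperBound L) measurableSet_Ioo
      fun q hq => integral_kernel_le_innerUpperBound hq.1 hL).trans (integral_innerUpperBound_le hL)
  have hlower : π * log (L + 1) - 8 ≤ ∫ q in Ioo 0 L, ∫ q' in Ioo 0 L, kernel q q' :=
    (le_integral_innerLowerBound hL).trans (setIntegral_mono_on (integrableOn_innerLowerBound hL)
      hF measurableSet_Ioo fun q hq => innerLowerBound_le_integral_kernel hq.1 hL)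
  rw [abs_sub_le_iff]
  constructor <;> nlinarith [pi_le_four, pi_pos]

end CarlemanForm

theorem quadratic_form_tends_to_pi :
    Tendsto (fun L : ℝ => (Real.log (L + 1))⁻¹ *
        ∫ q in Set.Ioo (0 : ℝ) L, ∫ q' in Set.Ioo (0 : ℝ) L,
          1 / (Real.sqrt (q + 1) * Real.sqrt (q' + 1) * (q + q')))
      atTop (nhds Real.pi) := by
  have hlog : Tendsto (fun L : ℝ => log (L + 1)) atTop atTop :=
    tendsto_log_atTop.comp (tendsto_atTop_add_const_right _ 1 tendsto_id)
  exact tendsto_inv_mul_of_abs_sub_mul_le hlog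
    ((eventually_ge_atTop 0).mono fun _ hL => CarlemanForm.abs_integral_integral_kernel_sub_le hL)
end

section
/- Let σ₀, σ₁, σ₂ : ℝ² → ℝ be nonnegative integrable functions, each with total integral 1, satisfying the compatibility conditions: for almost every q₂, ∫ σ₀(q₁,q₂) dq₁ = ∫ σ₁(p₁,q₂) dp₁ (call this common value σ₀₁(q₂)), and for almost every p₁, ∫ σ₁(p₁,q₂) dq₂ = ∫ σ₂(p₁,p₂) dp₂ (call this σ₁₂(p₁)). Define ρ₀ : ℝ⁴ → ℝ by ρ₀(q₁,q₂,p₁,p₂) = σ₀(q₁,q₂) σ₁(p₁,q₂) σ₂(p₁,p₂) / (σ₀₁(q₂) σ₁₂(p₁)) whenever σ₀₁(q₂) > 0 and σ₁₂(p₁) > 0, and ρ₀ = 0 otherwise. Then ρ₀ is nonnegative, integrable on ℝ⁴ with total integral 1, and satisfies the three marginal conditions: for almost every (q₁,q₂), ∫∫ ρ₀(q₁,q₂,p₁,p₂) dp₁ dp₂ = σ₀(q₁,q₂); for almost every (p₁,q₂), ∫∫ ρ₀(q₁,q₂,p₁,p₂) dq₁ dp₂ = σ₁(p₁,q₂); and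 for almost every (p₁,p₂), ∫∫ ρ₀(q₁,q₂,p₁,p₂) dq₁ dq₂ = σ₂(p₁,p₂). -/
/-!
`ρ₀` is obtained by gluing twice. The density `τ(q₂, p₁, p₂) = σ₁(p₁, q₂) σ₂(p₁, p₂) / σ₁₂(p₁)`
glues `σ₁` and `σ₂` along their common marginal `σ₁₂`, and `ρ₀ = σ₀(q₁, q₂) τ(q₂, p₁, p₂) / σ₀₁(q₂)`
glues `σ₀` and `τ` along `σ₀₁`, which is also the `q₂`-marginal of `τ`. A glued density
`f(x, y) g(y, z) / m(y)` has marginals `f` and `g`: integrating out `x` (or `z`) leaves the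
indicator of `{m > 0}` times the other factor, and both `f` and `g` vanish a.e. where `m = 0`.
The marginal `σ₂`, which integrates out `q₁` before `q₂`, additionally needs Fubini.
-/

open MeasureTheory

noncomputable def condDensity {X Y : Type*} (f : X × Y → ℝ) (m : Y → ℝ) (p : X × Y) : ℝ :=
  if 0 < m p.2 then f p / m p.2 else 0

noncomputable def gluedDensity {X Y Z : Type*} (f : X × Y → ℝ) (g : Y × Z → ℝ) (m : Y → ℝ)
    (p : X × Y × Z) : ℝ :=
  condDensity f m (p.1, p.2.1) * g p.2

section Gluing

variable {X Y Z : Type*} {f : X × Y → ℝ} {g : Y × Z → ℝ} {m : Y → ℝ}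

theorem condDensity_nonneg (hf : 0 ≤ f) : 0 ≤ condDensity f m := by
  intro p
  unfold condDensity
  split_ifs with h
  · exact div_nonneg (hf p) h.le
  · exact le_rfl

theorem gluedDensity_nonneg (hf : 0 ≤ f) (hg : 0 ≤ g) : 0 ≤ gluedDensity f g m :=
  fun p => mul_nonneg (condDensity_nonneg hf (p.1, p.2.1)) (hg p.2)

theorem condDensity_mul_self (p : X × Y) :
    condDensity f m p * m p.2 = if 0 < m p.2 then f p else 0 := by
  unfold condDensity
  split_ifs with h
  · exact div_mul_cancel₀ _ h.ne'
  · exact zero_mul _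

theorem gluedDensity_gluedDensity {W : Type*} {h : Z × W → ℝ} {m' : Z → ℝ} (x : X) (y : Y)
    (z : Z) (w : W) :
    gluedDensity f (gluedDensity g h m') m (x, y, z, w) =
      if 0 < m y ∧ 0 < m' z then f (x, y) * g (y, z) * h (z, w) / (m y * m' z) else 0 := by
  simp only [gluedDensity, condDensity]
  by_cases hy : 0 < m y <;> by_cases hz : 0 < m' z <;>
    simp only [hy, hz, and_self, and_false, false_and, if_true, if_false, mul_zero, zero_mul]
  ring

theorem integral_condDensity [MeasurableSpace X] {μ : Measure X} {y : Y}
    (hy : m y = ∫ x, f (x, y) ∂μ) :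
    ∫ x, condDensity f m (x, y) ∂μ = if 0 < m y then 1 else 0 := by
  simp only [condDensity]
  split_ifs with h
  · rw [integral_div, ← hy, div_self h.ne']
  · exact integral_zero _ _

theorem integral_integral_gluedDensity [MeasurableSpace X] {μ : Measure X} {Z' : Type*}
    [MeasurableSpace Z'] {ξ' : Measure Z'} {g : Y × Z × Z' → ℝ} {y : Y}
    (hy : m y = ∫ x, f (x, y) ∂μ) (z : Z) :
    ∫ x, ∫ t, gluedDensity f g m (x, y, z, t) ∂ξ' ∂μ =
      if 0 < m y then ∫ t, g (y, z, t) ∂ξ' else 0 := by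
  simp only [gluedDensity, integral_const_mul, integral_mul_const, integral_condDensity hy,
    ite_mul, one_mul, zero_mul]

variable [MeasurableSpace X] [MeasurableSpace Y] [MeasurableSpace Z]
  {μ : Measure X} {ν : Measure Y} {ξ : Measure Z}

theorem integrable_prodAssoc_iff [SFinite ν] [SFinite ξ] {E : Type*} [NormedAddCommGroup E]
    {F : X × Y × Z → E} :
    Integrable (fun p : (X × Y) × Z => F (p.1.1, p.1.2, p.2)) ((μ.prod ν).prod ξ) ↔
      Integrable F (μ.prod (ν.prod ξ)) :=
  (measurePreserving_prodAssoc μ ν ξ).integrable_comp_emb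
    MeasurableEquiv.prodAssoc.measurableEmbedding

theorem aestronglyMeasurable_condDensity (hf : AEStronglyMeasurable f (μ.prod ν))
    (hm : AEStronglyMeasurable m ν) : AEStronglyMeasurable (condDensity f m) (μ.prod ν) := by
  have hinv : Measurable fun t : ℝ => if 0 < t then t⁻¹ else 0 :=
    Measurable.ite measurableSet_Ioi measurable_inv measurable_const
  have : condDensity f m = fun p => f p * if 0 < m p.2 then (m p.2)⁻¹ else 0 := by
    ext p
    simp only [condDensity, mul_ite, mul_zero, div_eq_mul_inv]
  rw [this]
  exact hf.mul (hinv.comp_aemeasurable hm.aemeasurable).aestronglyMeasurable.comp_snd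

theorem ae_eq_zero_of_marginal_snd_nonpos [SFinite μ] [SFinite ν]
    (hf : Integrable f (μ.prod ν)) (hf0 : 0 ≤ f) (hm : ∀ᵐ y ∂ν, m y = ∫ x, f (x, y) ∂μ) :
    ∀ᵐ p ∂μ.prod ν, m p.2 ≤ 0 → f p = 0 := by
  set φ : ℝ → ℝ := (Set.Iic 0).indicator 1
  have hφ01 (t : ℝ) : φ t = 0 ∨ φ t = 1 := by
    by_cases ht : t ≤ 0 <;> simp [φ, ht]
  have hm_meas : AEMeasurable m ν :=
    hf.integral_prod_right.aemeasurable.congr (hm.mono fun _ h => h.symm)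
  set H : X × Y → ℝ := fun p => φ (m p.2) * f p
  have hH0 : 0 ≤ H := fun p => mul_nonneg (by rcases hφ01 (m p.2) with h | h <;> simp [h]) (hf0 p)
  have hH : Integrable H (μ.prod ν) := by
    refine hf.mono ?_ (ae_of_all _ fun p => ?_)
    · exact ((measurable_one.indicator measurableSet_Iic).comp_aemeasurable
        hm_meas).aestronglyMeasurable.comp_snd.mul hf.aestronglyMeasurable
    · rcases hφ01 (m p.2) with h | h <;> simp [H, h]
  -- the mass of `f` over `{m ≤ 0}` is `∫ y, 1{m y ≤ 0} * m y ≤ 0`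
  have hH_int : ∫ p, H p ∂μ.prod ν = 0 := by
    refine le_antisymm ?_ (integral_nonneg hH0)
    rw [integral_prod_symm _ hH]
    refine integral_nonpos_of_ae ?_
    filter_upwards [hm] with y hy
    simp only [H, integral_const_mul, ← hy]
    by_cases h : m y ≤ 0 <;> simp [φ, h]
  filter_upwards [(integral_eq_zero_iff_of_nonneg hH0 hH).mp hH_int] with p hp hle
  simpa [H, φ, hle] using hp

theorem ae_eq_zero_of_marginal_fst_nonpos [SFinite ν] [SFinite ξ]
    (hg : Integrable g (ν.prod ξ)) (hg0 : 0 ≤ g) (hm : ∀ᵐ y ∂ν, m y = ∫ z, g (y, z) ∂ξ) :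
    ∀ᵐ p ∂ν.prod ξ, m p.1 ≤ 0 → g p = 0 :=
  Measure.measurePreserving_swap.quasiMeasurePreserving.ae
    (ae_eq_zero_of_marginal_snd_nonpos hg.swap (fun _ => hg0 _) hm)

theorem gluedDensity_marginal_left [SFinite μ] [SFinite ν] (hf : Integrable f (μ.prod ν))
    (hf0 : 0 ≤ f) (hmf : ∀ᵐ y ∂ν, m y = ∫ x, f (x, y) ∂μ)
    (hmg : ∀ᵐ y ∂ν, m y = ∫ z, g (y, z) ∂ξ) :
    ∀ᵐ w ∂μ.prod ν, ∫ z, gluedDensity f g m (w.1, w.2, z) ∂ξ = f w := by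
  filter_upwards [Measure.quasiMeasurePreserving_snd.ae hmg,
    ae_eq_zero_of_marginal_snd_nonpos hf hf0 hmf] with w hw hvan
  simp only [gluedDensity, integral_const_mul, ← hw, condDensity_mul_self]
  exact ite_eq_left_iff.mpr fun h => (hvan (not_lt.mp h)).symm

theorem gluedDensity_marginal_right [SFinite ν] [SFinite ξ] (hg : Integrable g (ν.prod ξ))
    (hg0 : 0 ≤ g) (hmf : ∀ᵐ y ∂ν, m y = ∫ x, f (x, y) ∂μ)
    (hmg : ∀ᵐ y ∂ν, m y = ∫ z, g (y, z) ∂ξ) :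
    ∀ᵐ w ∂ν.prod ξ, ∫ x, gluedDensity f g m (x, w) ∂μ = g w := by
  filter_upwards [Measure.quasiMeasurePreserving_fst.ae hmf,
    ae_eq_zero_of_marginal_fst_nonpos hg hg0 hmg] with w hw hvan
  simp only [gluedDensity, integral_mul_const, integral_condDensity hw, ite_mul, one_mul, zero_mul]
  exact ite_eq_left_iff.mpr fun h => (hvan (not_lt.mp h)).symm

theorem integrable_gluedDensity [SFinite μ] [SFinite ν] [SFinite ξ]
    (hf : Integrable f (μ.prod ν)) (hf0 : 0 ≤ f) (hg : Integrable g (ν.prod ξ)) (hg0 : 0 ≤ g)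
    (hmf : ∀ᵐ y ∂ν, m y = ∫ x, f (x, y) ∂μ) (hmg : ∀ᵐ y ∂ν, m y = ∫ z, g (y, z) ∂ξ) :
    Integrable (gluedDensity f g m) (μ.prod (ν.prod ξ)) := by
  have hm : AEStronglyMeasurable m ν :=
    hf.integral_prod_right.aestronglyMeasurable.congr (hmf.mono fun _ h => h.symm)
  have hmeas : AEStronglyMeasurable (fun p : (X × Y) × Z => condDensity f m p.1 * g (p.1.2, p.2))
      ((μ.prod ν).prod ξ) :=
    (aestronglyMeasurable_condDensity hf.aestronglyMeasurable hm).comp_fst.mul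
      (hg.aestronglyMeasurable.comp_quasiMeasurePreserving
        (QuasiMeasurePreserving.prodMap Measure.quasiMeasurePreserving_snd
          (Measure.QuasiMeasurePreserving.id _)))
  refine integrable_prodAssoc_iff.mp ((integrable_prod_iff hmeas).mpr ⟨?_, ?_⟩)
  · filter_upwards [Measure.quasiMeasurePreserving_snd.ae hg.prod_right_ae] with w hw
    exact hw.const_mul _
  · refine hf.congr ?_
    filter_upwards [gluedDensity_marginal_left hf hf0 hmf hmg] with w hw
    rw [← hw]
    exact integral_congr_ae (ae_of_all _ fun z =>
      (Real.norm_of_nonneg (gluedDensity_nonneg hf0 hg0 (w.1, w.2, z))).symm)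

theorem gluedDensity_marginal_fst [SFinite μ] [SFinite ν] [SFinite ξ]
    (hf : Integrable f (μ.prod ν)) (hf0 : 0 ≤ f) (hg : Integrable g (ν.prod ξ)) (hg0 : 0 ≤ g)
    (hmf : ∀ᵐ y ∂ν, m y = ∫ x, f (x, y) ∂μ) (hmg : ∀ᵐ y ∂ν, m y = ∫ z, g (y, z) ∂ξ) :
    ∀ᵐ x ∂μ, ∫ w, gluedDensity f g m (x, w) ∂ν.prod ξ = ∫ y, f (x, y) ∂ν := by
  filter_upwards [(integrable_gluedDensity hf hf0 hg hg0 hmf hmg).prod_right_ae,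
    Measure.ae_ae_of_ae_prod (gluedDensity_marginal_left hf hf0 hmf hmg)] with x hx hx'
  rw [integral_prod _ hx]
  exact integral_congr_ae hx'

theorem gluedDensity_marginal_last [SFinite μ] [SFinite ν] [SFinite ξ]
    (hf : Integrable f (μ.prod ν)) (hf0 : 0 ≤ f) (hg : Integrable g (ν.prod ξ)) (hg0 : 0 ≤ g)
    (hmf : ∀ᵐ y ∂ν, m y = ∫ x, f (x, y) ∂μ) (hmg : ∀ᵐ y ∂ν, m y = ∫ z, g (y, z) ∂ξ) :
    ∀ᵐ z ∂ξ, ∫ w, gluedDensity f g m (w.1, w.2, z) ∂μ.prod ν = ∫ y, g (y, z) ∂ν := by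
  filter_upwards [(integrable_prodAssoc_iff.mpr
      (integrable_gluedDensity hf hf0 hg hg0 hmf hmg)).prod_left_ae,
    Measure.ae_ae_of_ae_prod (Measure.measurePreserving_swap.quasiMeasurePreserving.ae
      (gluedDensity_marginal_right hg hg0 hmf hmg))] with z hz hz'
  rw [integral_prod_symm _ hz]
  exact integral_congr_ae hz'

theorem integral_gluedDensity [SFinite μ] [SFinite ν] [SFinite ξ]
    (hf : Integrable f (μ.prod ν)) (hf0 : 0 ≤ f) (hg : Integrable g (ν.prod ξ)) (hg0 : 0 ≤ g)
    (hmf : ∀ᵐ y ∂ν, m y = ∫ x, f (x, y) ∂μ) (hmg : ∀ᵐ y ∂ν, m y = ∫ z, g (y, z) ∂ξ) :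
    ∫ p, gluedDensity f g m p ∂μ.prod (ν.prod ξ) = ∫ w, f w ∂μ.prod ν := by
  rw [integral_prod _ (integrable_gluedDensity hf hf0 hg hg0 hmf hmg), integral_prod _ hf]
  exact integral_congr_ae (gluedDensity_marginal_fst hf hf0 hg hg0 hmf hmg)

end Gluing

theorem three_marginal_product_solution_general
    (σ₀ σ₁ σ₂ : ℝ × ℝ → ℝ)
    (h₀int : Integrable σ₀) (h₁int : Integrable σ₁) (h₂int : Integrable σ₂)
    (h₀pos : ∀ x, 0 ≤ σ₀ x) (h₁pos : ∀ x, 0 ≤ σ₁ x) (h₂pos : ∀ x, 0 ≤ σ₂ x)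
    (h₀norm : (∫ x, σ₀ x) = 1)
    (σ₀₁ σ₁₂ : ℝ → ℝ)
    (hσ₀₁ : ∀ q₂ : ℝ, σ₀₁ q₂ = ∫ q₁ : ℝ, σ₀ (q₁, q₂))
    (hσ₁₂ : ∀ p₁ : ℝ, σ₁₂ p₁ = ∫ q₂ : ℝ, σ₁ (p₁, q₂))
    (hcompat₁ : ∀ᵐ q₂ : ℝ ∂volume, σ₀₁ q₂ = ∫ p₁ : ℝ, σ₁ (p₁, q₂))
    (hcompat₂ : ∀ᵐ p₁ : ℝ ∂volume, σ₁₂ p₁ = ∫ p₂ : ℝ, σ₂ (p₁, p₂))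
    (ρ₀ : ℝ → ℝ → ℝ → ℝ → ℝ)
    (hρ₀ : ∀ q₁ q₂ p₁ p₂ : ℝ, ρ₀ q₁ q₂ p₁ p₂ =
      if 0 < σ₀₁ q₂ ∧ 0 < σ₁₂ p₁ then
        σ₀ (q₁, q₂) * σ₁ (p₁, q₂) * σ₂ (p₁, p₂) / (σ₀₁ q₂ * σ₁₂ p₁)
      else 0) :
    (∀ q₁ q₂ p₁ p₂ : ℝ, 0 ≤ ρ₀ q₁ q₂ p₁ p₂) ∧
    Integrable (fun x : ℝ × ℝ × ℝ × ℝ => ρ₀ x.1 x.2.1 x.2.2.1 x.2.2.2) ∧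
    (∫ x : ℝ × ℝ × ℝ × ℝ, ρ₀ x.1 x.2.1 x.2.2.1 x.2.2.2) = 1 ∧
    (∀ᵐ q : ℝ × ℝ ∂volume, (∫ p₁ : ℝ, ∫ p₂ : ℝ, ρ₀ q.1 q.2 p₁ p₂) = σ₀ q) ∧
    (∀ᵐ pq : ℝ × ℝ ∂volume, (∫ q₁ : ℝ, ∫ p₂ : ℝ, ρ₀ q₁ pq.2 pq.1 p₂) = σ₁ pq) ∧
    (∀ᵐ pp : ℝ × ℝ ∂volume, (∫ q₁ : ℝ, ∫ q₂ : ℝ, ρ₀ q₁ q₂ pp.1 pp.2) = σ₂ pp) := by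
  set τ := gluedDensity (σ₁ ∘ Prod.swap) σ₂ σ₁₂
  have hρ : ∀ q₁ q₂ p₁ p₂, ρ₀ q₁ q₂ p₁ p₂ = gluedDensity σ₀ τ σ₀₁ (q₁, q₂, p₁, p₂) :=
    fun q₁ q₂ p₁ p₂ => by rw [hρ₀, gluedDensity_gluedDensity]; rfl
  have h₁int' : Integrable (σ₁ ∘ Prod.swap) (volume.prod volume) := h₁int.swap
  have h₁pos' : 0 ≤ σ₁ ∘ Prod.swap := fun _ => h₁pos _
  have hσ₁₂' : ∀ᵐ p₁ ∂volume, σ₁₂ p₁ = ∫ q₂, (σ₁ ∘ Prod.swap) (q₂, p₁) := ae_of_all _ hσ₁₂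
  have hτ0 : 0 ≤ τ := gluedDensity_nonneg h₁pos' h₂pos
  have hτ : Integrable τ (volume.prod (volume.prod volume)) :=
    integrable_gluedDensity h₁int' h₁pos' h₂int h₂pos hσ₁₂' hcompat₂
  have hσ₀₁' : ∀ᵐ q₂ ∂volume, σ₀₁ q₂ = ∫ q₁, σ₀ (q₁, q₂) := ae_of_all _ hσ₀₁
  have hσ₀₁τ : ∀ᵐ q₂ ∂volume, σ₀₁ q₂ = ∫ w, τ (q₂, w) := by
    filter_upwards [gluedDensity_marginal_fst h₁int' h₁pos' h₂int h₂pos hσ₁₂' hcompat₂,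
      hcompat₁] with q₂ h₁ h₂
    exact h₂.trans h₁.symm
  have hρint : Integrable (gluedDensity σ₀ τ σ₀₁) (volume.prod (volume.prod volume)) :=
    integrable_gluedDensity h₀int h₀pos hτ hτ0 hσ₀₁' hσ₀₁τ
  simp only [hρ, Prod.mk.eta]
  refine ⟨fun _ _ _ _ => gluedDensity_nonneg h₀pos hτ0 _, hρint, ?_, ?_, ?_, ?_⟩
  · exact (integral_gluedDensity h₀int h₀pos hτ hτ0 hσ₀₁' hσ₀₁τ).trans h₀norm
  · filter_upwards [gluedDensity_marginal_left h₀int h₀pos hσ₀₁' hσ₀₁τ,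
      (integrable_prodAssoc_iff.mpr hρint).prod_right_ae] with q h₁ h₂
    exact (integral_prod _ h₂).symm.trans h₁
  · filter_upwards [Measure.measurePreserving_swap.quasiMeasurePreserving.ae
      (gluedDensity_marginal_left h₁int' h₁pos' hσ₁₂' hcompat₂),
      ae_eq_zero_of_marginal_snd_nonpos h₁int h₁pos hcompat₁] with pq h₁ h₂
    rw [integral_integral_gluedDensity (hσ₀₁ pq.2),
      show ∫ t, τ (pq.2, pq.1, t) = σ₁ pq from h₁]
    exact ite_eq_left_iff.mpr fun h => (h₂ (not_lt.mp h)).symm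
  · filter_upwards [gluedDensity_marginal_last h₀int h₀pos hτ hτ0 hσ₀₁' hσ₀₁τ,
      gluedDensity_marginal_right h₂int h₂pos hσ₁₂' hcompat₂,
      (integrable_prodAssoc_iff.mpr hρint).prod_left_ae] with pp h₁ h₂ h₃
    exact (integral_prod _ h₃).symm.trans (h₁.trans h₂)

theorem three_marginal_product_solution
    (σ₀ σ₁ σ₂ : ℝ × ℝ → ℝ)
    (h₀int : Integrable σ₀) (h₁int : Integrable σ₁) (h₂int : Integrable σ₂)
    (h₀pos : ∀ x, 0 ≤ σ₀ x) (h₁pos : ∀ x, 0 ≤ σ₁ x) (h₂pos : ∀ x, 0 ≤ σ₂ x)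
    (h₀norm : (∫ x, σ₀ x) = 1) (h₁norm : (∫ x, σ₁ x) = 1) (h₂norm : (∫ x, σ₂ x) = 1)
    (σ₀₁ σ₁₂ : ℝ → ℝ)
    (hσ₀₁ : ∀ q₂ : ℝ, σ₀₁ q₂ = ∫ q₁ : ℝ, σ₀ (q₁, q₂))
    (hσ₁₂ : ∀ p₁ : ℝ, σ₁₂ p₁ = ∫ q₂ : ℝ, σ₁ (p₁, q₂))
    (hcompat₁ : ∀ᵐ q₂ : ℝ ∂volume, σ₀₁ q₂ = ∫ p₁ : ℝ, σ₁ (p₁, q₂))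
    (hcompat₂ : ∀ᵐ p₁ : ℝ ∂volume, σ₁₂ p₁ = ∫ p₂ : ℝ, σ₂ (p₁, p₂))
    (ρ₀ : ℝ → ℝ → ℝ → ℝ → ℝ)
    (hρ₀ : ∀ q₁ q₂ p₁ p₂ : ℝ, ρ₀ q₁ q₂ p₁ p₂ =
      if 0 < σ₀₁ q₂ ∧ 0 < σ₁₂ p₁ then
        σ₀ (q₁, q₂) * σ₁ (p₁, q₂) * σ₂ (p₁, p₂) / (σ₀₁ q₂ * σ₁₂ p₁)
      else 0) :
    (∀ q₁ q₂ p₁ p₂ : ℝ, 0 ≤ ρ₀ q₁ q₂ p₁ p₂) ∧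
    Integrable (fun x : ℝ × ℝ × ℝ × ℝ => ρ₀ x.1 x.2.1 x.2.2.1 x.2.2.2) ∧
    (∫ x : ℝ × ℝ × ℝ × ℝ, ρ₀ x.1 x.2.1 x.2.2.1 x.2.2.2) = 1 ∧
    (∀ᵐ q : ℝ × ℝ ∂volume, (∫ p₁ : ℝ, ∫ p₂ : ℝ, ρ₀ q.1 q.2 p₁ p₂) = σ₀ q) ∧
    (∀ᵐ pq : ℝ × ℝ ∂volume, (∫ q₁ : ℝ, ∫ p₂ : ℝ, ρ₀ q₁ pq.2 pq.1 p₂) = σ₁ pq) ∧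
    (∀ᵐ pp : ℝ × ℝ ∂volume, (∫ q₁ : ℝ, ∫ q₂ : ℝ, ρ₀ q₁ q₂ pp.1 pp.2) = σ₂ pp) :=
  three_marginal_product_solution_general σ₀ σ₁ σ₂ h₀int h₁int h₂int h₀pos h₁pos h₂pos h₀norm σ₀₁
    σ₁₂ hσ₀₁ hσ₁₂ hcompat₁ hcompat₂ ρ₀ hρ₀
end

section
/- Let σ₀, σ₁, σ₂ : ℝ² → ℝ be nonnegative integrable probability densities satisfying the compatibility conditions (for almost every q₂, σ₀₁(q₂) := ∫ σ₀(q₁,q₂) dq₁ = ∫ σ₁(p₁,q₂) dp₁; for almost every p₁, σ₁₂(p₁) := ∫ σ₁(p₁,q₂) dq₂ = ∫ σ₂(p₁,p₂) dp₂), and let ρ₀ = σ₀σ₁σ₂/(σ₀₁σ₁₂) (set to 0 where a denominator vanishes) be the associated product solution. Let ρ ∈ L¹(ℝ⁴) be any nonnegative solution of the three marginal equations: ∫∫ ρ dp₁dp₂ = σ₀(q₁,q₂) a.e., ∫∫ ρ dq₁dp₂ = σ₁(p₁,q₂) a.e., ∫∫ ρ dq₁dq₂ = σ₂(p₁,p₂)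 a.e. Then: (i) ρ vanishes almost everywhere outside the set E = {(q₁,q₂,p₁,p₂) : σ₀(q₁,q₂) > 0, σ₁(p₁,q₂) > 0, σ₂(p₁,p₂) > 0}; and (ii) substituting F = ρ into the formula Δ = F − ρ₀·[ (1/σ₀) ∫∫ F dp₁′dp₂′ + (1/σ₁) ∫∫ F dq₁′dp₂′ + (1/σ₂) ∫∫ F dq₁′dq₂′ − (1/σ₀₁) ∫∫∫ F dq₁′dp₁′dp₂′ − (1/σ₁₂) ∫∫∫ F dq₁′dq₂′dp₂′ ] yields Δ = ρ − ρ₀ almost everywhere; hence every nonnegative L¹ solution is of the form ρ₀ + Δ_F for some F ∈ L¹(ℝ⁴) supported in E. -/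
open MeasureTheory

private lemma aux_vanish {α β₁ β₂ : Type*} [MeasurableSpace α] [MeasurableSpace β₁]
    [MeasurableSpace β₂]
    {μ : Measure α} {ν₁ : Measure β₁} {ν₂ : Measure β₂}
    [SigmaFinite μ] [SigmaFinite ν₁] [SigmaFinite ν₂]
    (f : α × β₁ × β₂ → ℝ) (s : α → ℝ)
    (hf : Integrable f (μ.prod (ν₁.prod ν₂)))
    (hpos : ∀ z, 0 ≤ f z)
    (hs : AEStronglyMeasurable s μ)
    (hmarg : ∀ᵐ a ∂μ, (∫ b₁, ∫ b₂, f (a, b₁, b₂) ∂ν₂ ∂ν₁) = s a) :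
    ∀ᵐ z ∂(μ.prod (ν₁.prod ν₂)), s z.1 = 0 → f z = 0 := by
  set g := hf.1.mk f with hgdef
  have hgmeas : StronglyMeasurable g := hf.1.stronglyMeasurable_mk
  have hfg : ∀ᵐ z ∂(μ.prod (ν₁.prod ν₂)), f z = g z := hf.1.ae_eq_mk
  set t := hs.mk s with htdef
  have htmeas : StronglyMeasurable t := hs.stronglyMeasurable_mk
  have hst : ∀ᵐ a ∂μ, s a = t a := hs.ae_eq_mk
  have hst4 : ∀ᵐ z ∂(μ.prod (ν₁.prod ν₂)), s z.1 = t z.1 :=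
    Measure.quasiMeasurePreserving_fst.ae hst
  have hmain : ∀ᵐ a ∂μ,
      (ν₁.prod ν₂) (Prod.mk a ⁻¹' {z : α × β₁ × β₂ | t z.1 = 0 ∧ g z ≠ 0}) = 0 := by
    filter_upwards [hmarg, hst, hf.prod_right_ae, Measure.ae_ae_of_ae_prod hfg]
      with a h1 h2 h3 h4
    by_cases h5 : t a = 0
    · have hint0 : (∫ b, f (a, b) ∂(ν₁.prod ν₂)) = 0 := by
        rw [MeasureTheory.integral_prod _ h3, h1, h2, h5]
      have hf0 : ∀ᵐ b ∂(ν₁.prod ν₂), f (a, b) = 0 :=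
        (integral_eq_zero_iff_of_nonneg_ae (Filter.Eventually.of_forall fun b => hpos _) h3).1
          hint0
      have hg0 : ∀ᵐ b ∂(ν₁.prod ν₂), g (a, b) = 0 := by
        filter_upwards [hf0, h4] with b hb1 hb2
        rw [← hb2]; exact hb1
      refine measure_mono_null (fun b hb => ?_) (ae_iff.1 hg0)
      exact hb.2
    · have hempty : Prod.mk a ⁻¹' {z : α × β₁ × β₂ | t z.1 = 0 ∧ g z ≠ 0} = ∅ := by
        ext b; simp [h5]
      rw [hempty, measure_empty]
  have hS : MeasurableSet {z : α × β₁ × β₂ | t z.1 = 0 ∧ g z ≠ 0} := by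
    have h1 : MeasurableSet {z : α × β₁ × β₂ | t z.1 = 0} :=
      (htmeas.measurable.comp measurable_fst) (measurableSet_singleton 0)
    have h2 : MeasurableSet {z : α × β₁ × β₂ | g z ≠ 0} :=
      (hgmeas.measurable (measurableSet_singleton 0)).compl
    exact h1.inter h2
  have hnull : (μ.prod (ν₁.prod ν₂)) {z : α × β₁ × β₂ | t z.1 = 0 ∧ g z ≠ 0} = 0 :=
    (Measure.measure_prod_null hS).2 hmain
  have hG : ∀ᵐ z ∂(μ.prod (ν₁.prod ν₂)), t z.1 = 0 → g z = 0 := by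
    rw [ae_iff]
    refine measure_mono_null (fun z hz => ?_) hnull
    simp only [Set.mem_setOf_eq] at hz ⊢
    exact Classical.not_imp.mp hz
  filter_upwards [hG, hfg, hst4] with z h1 h2 h3 h4
  rw [h2]
  exact h1 (h3 ▸ h4)

theorem three_marginal_general_solution_representation
    (σ₀ σ₁ σ₂ : ℝ × ℝ → ℝ)
    (h₀int : Integrable σ₀) (h₁int : Integrable σ₁) (h₂int : Integrable σ₂)
    (h₀pos : ∀ x, 0 ≤ σ₀ x) (h₁pos : ∀ x, 0 ≤ σ₁ x) (h₂pos : ∀ x, 0 ≤ σ₂ x)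
    (h₀norm : (∫ x, σ₀ x) = 1) (h₁norm : (∫ x, σ₁ x) = 1) (h₂norm : (∫ x, σ₂ x) = 1)
    (σ₀₁ σ₁₂ : ℝ → ℝ)
    (hσ₀₁ : ∀ q₂ : ℝ, σ₀₁ q₂ = ∫ q₁ : ℝ, σ₀ (q₁, q₂))
    (hσ₁₂ : ∀ p₁ : ℝ, σ₁₂ p₁ = ∫ q₂ : ℝ, σ₁ (p₁, q₂))
    (hcompat₁ : ∀ᵐ q₂ : ℝ ∂volume, σ₀₁ q₂ = ∫ p₁ : ℝ, σ₁ (p₁, q₂))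
    (hcompat₂ : ∀ᵐ p₁ : ℝ ∂volume, σ₁₂ p₁ = ∫ p₂ : ℝ, σ₂ (p₁, p₂))
    (ρ₀ : ℝ → ℝ → ℝ → ℝ → ℝ)
    (hρ₀ : ∀ q₁ q₂ p₁ p₂ : ℝ, ρ₀ q₁ q₂ p₁ p₂ =
      if 0 < σ₀₁ q₂ ∧ 0 < σ₁₂ p₁ then
        σ₀ (q₁, q₂) * σ₁ (p₁, q₂) * σ₂ (p₁, p₂) / (σ₀₁ q₂ * σ₁₂ p₁)
      else 0)
    (ρ : ℝ → ℝ → ℝ → ℝ → ℝ)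
    (hρint : Integrable (fun x : ℝ × ℝ × ℝ × ℝ => ρ x.1 x.2.1 x.2.2.1 x.2.2.2))
    (hρpos : ∀ q₁ q₂ p₁ p₂ : ℝ, 0 ≤ ρ q₁ q₂ p₁ p₂)
    (hρmarg₀ : ∀ᵐ q : ℝ × ℝ ∂volume, (∫ p₁ : ℝ, ∫ p₂ : ℝ, ρ q.1 q.2 p₁ p₂) = σ₀ q)
    (hρmarg₁ : ∀ᵐ pq : ℝ × ℝ ∂volume, (∫ q₁ : ℝ, ∫ p₂ : ℝ, ρ q₁ pq.2 pq.1 p₂) = σ₁ pq)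
    (hρmarg₂ : ∀ᵐ pp : ℝ × ℝ ∂volume, (∫ q₁ : ℝ, ∫ q₂ : ℝ, ρ q₁ q₂ pp.1 pp.2) = σ₂ pp)
    (Δ : ℝ → ℝ → ℝ → ℝ → ℝ)
    (hΔ : ∀ q₁ q₂ p₁ p₂ : ℝ, Δ q₁ q₂ p₁ p₂ =
      ρ q₁ q₂ p₁ p₂ - ρ₀ q₁ q₂ p₁ p₂ *
        ((∫ p₁' : ℝ, ∫ p₂' : ℝ, ρ q₁ q₂ p₁' p₂') / σ₀ (q₁, q₂)
          + (∫ q₁' : ℝ, ∫ p₂' : ℝ, ρ q₁' q₂ p₁ p₂') / σ₁ (p₁, q₂)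
          + (∫ q₁' : ℝ, ∫ q₂' : ℝ, ρ q₁' q₂' p₁ p₂) / σ₂ (p₁, p₂)
          - (∫ q₁' : ℝ, ∫ p₁' : ℝ, ∫ p₂' : ℝ, ρ q₁' q₂ p₁' p₂') / σ₀₁ q₂
          - (∫ q₁' : ℝ, ∫ q₂' : ℝ, ∫ p₂' : ℝ, ρ q₁' q₂' p₁ p₂') / σ₁₂ p₁)) :
    (∀ᵐ x : ℝ × ℝ × ℝ × ℝ ∂volume,
      ¬ (0 < σ₀ (x.1, x.2.1) ∧ 0 < σ₁ (x.2.2.1, x.2.1) ∧ 0 < σ₂ (x.2.2.1, x.2.2.2)) →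
        ρ x.1 x.2.1 x.2.2.1 x.2.2.2 = 0) ∧
    (∀ᵐ x : ℝ × ℝ × ℝ × ℝ ∂volume,
      Δ x.1 x.2.1 x.2.2.1 x.2.2.2
        = ρ x.1 x.2.1 x.2.2.1 x.2.2.2 - ρ₀ x.1 x.2.1 x.2.2.1 x.2.2.2) := by
  classical
  have hvol2 : (volume : Measure (ℝ × ℝ)) = (volume : Measure ℝ).prod volume :=
    Measure.volume_eq_prod ℝ ℝ
  have hvol4 : (volume : Measure (ℝ × ℝ × ℝ × ℝ))
      = (volume : Measure ℝ).prod ((volume : Measure ℝ).prod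
          ((volume : Measure ℝ).prod (volume : Measure ℝ))) := by
    rw [Measure.volume_eq_prod, Measure.volume_eq_prod, Measure.volume_eq_prod]
  set v : Measure ℝ := volume with hv
  set P4 : Measure (ℝ × ℝ × ℝ × ℝ) := v.prod (v.prod (v.prod v)) with hP4
  rw [hvol4] at hρint
  rw [hvol2] at hρmarg₀ hρmarg₁ hρmarg₂ h₀int h₁int h₂int
  -- measure preserving rearrangements
  have mpQQ : MeasurePreserving
      (fun z : (ℝ × ℝ) × (ℝ × ℝ) => (z.1.1, z.1.2, z.2.1, z.2.2))
      ((v.prod v).prod (v.prod v)) P4 :=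
    measurePreserving_prodAssoc v v (v.prod v)
  have mpGQQ : MeasurePreserving
      (fun x : ℝ × ℝ × ℝ × ℝ => ((x.1, x.2.1), (x.2.2.1, x.2.2.2)))
      P4 ((v.prod v).prod (v.prod v)) :=
    MeasurePreserving.symm MeasurableEquiv.prodAssoc
      (measurePreserving_prodAssoc v v (v.prod v))
  have mpInn : MeasurePreserving
      (fun w : ℝ × ℝ × ℝ => (w.2.2, w.2.1, w.1))
      (v.prod (v.prod v)) (v.prod (v.prod v)) :=
    (measurePreserving_prodAssoc v v v).comp
      ((Measure.measurePreserving_swap.prod (MeasurePreserving.id v)).comp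
        Measure.measurePreserving_swap)
  have mpPQ : MeasurePreserving
      (fun z : (ℝ × ℝ) × (ℝ × ℝ) => (z.2.1, z.1.2, z.1.1, z.2.2))
      ((v.prod v).prod (v.prod v)) P4 :=
    ((MeasurePreserving.id v).prod mpInn).comp
      ((measurePreserving_prodAssoc v v (v.prod v)).comp Measure.measurePreserving_swap)
  have mpGPQ : MeasurePreserving
      (fun x : ℝ × ℝ × ℝ × ℝ => ((x.2.2.1, x.2.1), (x.1, x.2.2.2)))
      P4 ((v.prod v).prod (v.prod v)) :=
    Measure.measurePreserving_swap.comp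
      ((MeasurePreserving.symm MeasurableEquiv.prodAssoc
          (measurePreserving_prodAssoc v v (v.prod v))).comp
        ((MeasurePreserving.id v).prod mpInn))
  have mpPP : MeasurePreserving
      (fun z : (ℝ × ℝ) × (ℝ × ℝ) => (z.2.1, z.2.2, z.1.1, z.1.2))
      ((v.prod v).prod (v.prod v)) P4 :=
    (measurePreserving_prodAssoc v v (v.prod v)).comp Measure.measurePreserving_swap
  have mpGPP : MeasurePreserving
      (fun x : ℝ × ℝ × ℝ × ℝ => ((x.2.2.1, x.2.2.2), (x.1, x.2.1)))
      P4 ((v.prod v).prod (v.prod v)) :=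
    Measure.measurePreserving_swap.comp mpGQQ
  have mpP1 : MeasurePreserving
      (fun z : ℝ × ((ℝ × ℝ) × ℝ) => (z.2.1.1, z.2.1.2, z.1, z.2.2))
      (v.prod ((v.prod v).prod v)) P4 :=
    (measurePreserving_prodAssoc v v (v.prod v)).comp
      (((MeasurePreserving.id (v.prod v)).prod Measure.measurePreserving_swap).comp
        ((measurePreserving_prodAssoc (v.prod v) v v).comp Measure.measurePreserving_swap))
  -- part (i)
  have part1 : ∀ᵐ x : ℝ × ℝ × ℝ × ℝ ∂P4,
      ¬ (0 < σ₀ (x.1, x.2.1) ∧ 0 < σ₁ (x.2.2.1, x.2.1) ∧ 0 < σ₂ (x.2.2.1, x.2.2.2)) →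
        ρ x.1 x.2.1 x.2.2.1 x.2.2.2 = 0 := by
    have A₀ := aux_vanish (μ := v.prod v) (ν₁ := v) (ν₂ := v)
      (fun z : (ℝ × ℝ) × ℝ × ℝ => ρ z.1.1 z.1.2 z.2.1 z.2.2) σ₀
      ((mpQQ.integrable_comp hρint.aestronglyMeasurable).mpr hρint)
      (fun z => hρpos _ _ _ _) h₀int.aestronglyMeasurable hρmarg₀
    have A₁ := aux_vanish (μ := v.prod v) (ν₁ := v) (ν₂ := v)
      (fun z : (ℝ × ℝ) × ℝ × ℝ => ρ z.2.1 z.1.2 z.1.1 z.2.2) σ₁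
      ((mpPQ.integrable_comp hρint.aestronglyMeasurable).mpr hρint)
      (fun z => hρpos _ _ _ _) h₁int.aestronglyMeasurable hρmarg₁
    have A₂ := aux_vanish (μ := v.prod v) (ν₁ := v) (ν₂ := v)
      (fun z : (ℝ × ℝ) × ℝ × ℝ => ρ z.2.1 z.2.2 z.1.1 z.1.2) σ₂
      ((mpPP.integrable_comp hρint.aestronglyMeasurable).mpr hρint)
      (fun z => hρpos _ _ _ _) h₂int.aestronglyMeasurable hρmarg₂
    have v₀ : ∀ᵐ x : ℝ × ℝ × ℝ × ℝ ∂P4,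
        σ₀ (x.1, x.2.1) = 0 → ρ x.1 x.2.1 x.2.2.1 x.2.2.2 = 0 :=
      mpGQQ.quasiMeasurePreserving.ae A₀
    have v₁ : ∀ᵐ x : ℝ × ℝ × ℝ × ℝ ∂P4,
        σ₁ (x.2.2.1, x.2.1) = 0 → ρ x.1 x.2.1 x.2.2.1 x.2.2.2 = 0 :=
      mpGPQ.quasiMeasurePreserving.ae A₁
    have v₂ : ∀ᵐ x : ℝ × ℝ × ℝ × ℝ ∂P4,
        σ₂ (x.2.2.1, x.2.2.2) = 0 → ρ x.1 x.2.1 x.2.2.1 x.2.2.2 = 0 :=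
      mpGPP.quasiMeasurePreserving.ae A₂
    filter_upwards [v₀, v₁, v₂] with x h0 h1 h2 hn
    by_cases k0 : σ₀ (x.1, x.2.1) = 0
    · exact h0 k0
    by_cases k1 : σ₁ (x.2.2.1, x.2.1) = 0
    · exact h1 k1
    by_cases k2 : σ₂ (x.2.2.1, x.2.2.2) = 0
    · exact h2 k2
    exact absurd ⟨(h₀pos _).lt_of_ne (Ne.symm k0), (h₁pos _).lt_of_ne (Ne.symm k1),
      (h₂pos _).lt_of_ne (Ne.symm k2)⟩ hn
  -- part (ii) ingredients
  have fa : ∀ᵐ x : ℝ × ℝ × ℝ × ℝ ∂P4,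
      (∫ p₁' : ℝ, ∫ p₂' : ℝ, ρ x.1 x.2.1 p₁' p₂') = σ₀ (x.1, x.2.1) :=
    (Measure.quasiMeasurePreserving_fst.comp mpGQQ.quasiMeasurePreserving).ae hρmarg₀
  have fb : ∀ᵐ x : ℝ × ℝ × ℝ × ℝ ∂P4,
      (∫ q₁' : ℝ, ∫ p₂' : ℝ, ρ q₁' x.2.1 x.2.2.1 p₂') = σ₁ (x.2.2.1, x.2.1) :=
    (Measure.quasiMeasurePreserving_fst.comp mpGPQ.quasiMeasurePreserving).ae hρmarg₁
  have fc : ∀ᵐ x : ℝ × ℝ × ℝ × ℝ ∂P4,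
      (∫ q₁' : ℝ, ∫ q₂' : ℝ, ρ q₁' q₂' x.2.2.1 x.2.2.2) = σ₂ (x.2.2.1, x.2.2.2) :=
    (Measure.quasiMeasurePreserving_fst.comp mpGPP.quasiMeasurePreserving).ae hρmarg₂
  have hd : ∀ᵐ q₂ : ℝ ∂v,
      (∫ q₁ : ℝ, ∫ p₁ : ℝ, ∫ p₂ : ℝ, ρ q₁ q₂ p₁ p₂) = σ₀₁ q₂ := by
    have hsw : ∀ᵐ q : ℝ × ℝ ∂(v.prod v),
        (∫ p₁ : ℝ, ∫ p₂ : ℝ, ρ q.2 q.1 p₁ p₂) = σ₀ (q.2, q.1) :=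
      Measure.measurePreserving_swap.quasiMeasurePreserving.ae hρmarg₀
    have h2 := Measure.ae_ae_of_ae_prod hsw
    filter_upwards [h2] with q₂ hq₂
    rw [hσ₀₁ q₂]
    exact integral_congr_ae hq₂
  have fd : ∀ᵐ x : ℝ × ℝ × ℝ × ℝ ∂P4,
      (∫ q₁' : ℝ, ∫ p₁' : ℝ, ∫ p₂' : ℝ, ρ q₁' x.2.1 p₁' p₂') = σ₀₁ x.2.1 :=
    (Measure.quasiMeasurePreserving_fst.comp Measure.quasiMeasurePreserving_snd).ae hd
  have he : ∀ᵐ p₁ : ℝ ∂v,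
      (∫ q₁ : ℝ, ∫ q₂ : ℝ, ∫ p₂ : ℝ, ρ q₁ q₂ p₁ p₂) = σ₁₂ p₁ := by
    have h1 := Measure.ae_ae_of_ae_prod hρmarg₁
    have hint3 : ∀ᵐ p₁ : ℝ ∂v,
        Integrable (fun w : (ℝ × ℝ) × ℝ => ρ w.1.1 w.1.2 p₁ w.2) ((v.prod v).prod v) :=
      Integrable.prod_right_ae ((mpP1.integrable_comp hρint.aestronglyMeasurable).mpr hρint)
    filter_upwards [h1, hint3] with p₁ hp₁ hintp
    have hswap : (∫ q₁ : ℝ, ∫ q₂ : ℝ, ∫ p₂ : ℝ, ρ q₁ q₂ p₁ p₂ ∂v ∂v ∂v)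
        = ∫ q₂ : ℝ, ∫ q₁ : ℝ, ∫ p₂ : ℝ, ρ q₁ q₂ p₁ p₂ ∂v ∂v ∂v :=
      integral_integral_swap hintp.integral_prod_left
    rw [hswap, hσ₁₂ p₁]
    exact integral_congr_ae hp₁
  have fe : ∀ᵐ x : ℝ × ℝ × ℝ × ℝ ∂P4,
      (∫ q₁' : ℝ, ∫ q₂' : ℝ, ∫ p₂' : ℝ, ρ q₁' q₂' x.2.2.1 p₂') = σ₁₂ x.2.2.1 :=
    (Measure.quasiMeasurePreserving_fst.comp
      (Measure.quasiMeasurePreserving_snd.comp Measure.quasiMeasurePreserving_snd)).ae he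
  have part2 : ∀ᵐ x : ℝ × ℝ × ℝ × ℝ ∂P4,
      Δ x.1 x.2.1 x.2.2.1 x.2.2.2
        = ρ x.1 x.2.1 x.2.2.1 x.2.2.2 - ρ₀ x.1 x.2.1 x.2.2.1 x.2.2.2 := by
    filter_upwards [fa, fb, fc, fd, fe] with x ha hb hc hdd hee
    rw [hΔ, ha, hb, hc, hdd, hee]
    by_cases h : ρ₀ x.1 x.2.1 x.2.2.1 x.2.2.2 = 0
    · rw [h]; ring
    · have hcond := hρ₀ x.1 x.2.1 x.2.2.1 x.2.2.2
      by_cases hc2 : 0 < σ₀₁ x.2.1 ∧ 0 < σ₁₂ x.2.2.1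
      · rw [if_pos hc2] at hcond
        have hnum : σ₀ (x.1, x.2.1) * σ₁ (x.2.2.1, x.2.1) * σ₂ (x.2.2.1, x.2.2.2) ≠ 0 := by
          intro h0
          exact h (by rw [hcond, h0, zero_div])
        have k0 : σ₀ (x.1, x.2.1) ≠ 0 := fun h0 => hnum (by rw [h0]; ring)
        have k1 : σ₁ (x.2.2.1, x.2.1) ≠ 0 := fun h0 => hnum (by rw [h0]; ring)
        have k2 : σ₂ (x.2.2.1, x.2.2.2) ≠ 0 := fun h0 => hnum (by rw [h0]; ring)
        rw [div_self k0, div_self k1, div_self k2, div_self hc2.1.ne', div_self hc2.2.ne']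
        ring
      · rw [if_neg hc2] at hcond
        exact absurd hcond h
  rw [hvol4]
  exact ⟨part1, part2⟩
end
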